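/- arXiv:2503.15950 — 7 statements merged into one kernel-verified Lean document; each statement's English description precedes it below -/
import Mathlib

section
/- Let G be a Hamiltonian graph on an odd number n of vertices such that the cycle space C(G) is not generated by the Hamilton cycles (i.e., C_n(G) ≠ C(G)). Then there exists a subgraph R ⊆ G such that: (a) R ≠ G; (b) every Hamilton cycle of G contains an even number of edges from R; and (c) for every partition V(G) = A ∪ B, the number of R-edges between A and B is at least half the number of G-edges between A and B, and R is not equal to the bipartite subgraph G[A,B]. -/
open SimpleGraph

variable {V : Type} [Fintype V] [DecidableEq V]

/-- Indicator vector over F₂ of a list of edges. -/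
def edgeIndicator (l : List (Sym2 V)) : Sym2 V → ZMod 2 :=
  fun e => if e ∈ l then 1 else 0

/-- The cycle space of a graph: the F₂-span of edge sets of cycles. -/
def cycleSpace (G : SimpleGraph V) : Submodule (ZMod 2) (Sym2 V → ZMod 2) :=
  Submodule.span (ZMod 2)
    {f | ∃ (u : V) (c : G.Walk u u), c.IsCycle ∧ f = edgeIndicator c.edges}

/-- The subspace of the cycle space generated by cycles of length exactly `k`. -/
def cycleSpaceLen (G : SimpleGraph V) (k : ℕ) : Submodule (ZMod 2) (Sym2 V → ZMod 2) :=
  Submodule.span (ZMod 2)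
    {f | ∃ (u : V) (c : G.Walk u u), c.IsCycle ∧ c.length = k ∧ f = edgeIndicator c.edges}

/-- Number of edges of `G` with one endpoint in `A` and one in `B`. -/
noncomputable def eCnt (G : SimpleGraph V) (A B : Set V) : ℕ :=
  {e : Sym2 V | e ∈ G.edgeSet ∧ ∃ a ∈ A, ∃ b ∈ B, e = s(a, b)}.ncard

/-- The bipartite subgraph `G[A,B]` of edges with one endpoint in `A`, one in `B`. -/
def bipSub (G : SimpleGraph V) (A B : Set V) : SimpleGraph V where
  Adj x y := G.Adj x y ∧ ((x ∈ A ∧ y ∈ B) ∨ (x ∈ B ∧ y ∈ A))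
  symm := by
    constructor
    intro x y h
    exact ⟨h.1.symm, by tauto⟩
  loopless := by
    constructor
    intro x h
    exact (G.ne_of_adj h.1) rfl

/-!
Since `C_n(G) ≠ C(G)`, some functional on the edge space vanishes on `C_n(G)` but not on `C(G)`;
its support is a subgraph `R ≤ G` meeting every `n`-cycle evenly and some cycle oddly. Choose
such an `R` with the most edges. A cut `G[A,B]` meets every closed walk evenly, so `R ∆ G[A,B]`
has the same two properties, and maximality gives `|R ∆ G[A,B]| ≤ |R|`, which is
`e_G(A,B) ≤ 2 e_R(A,B)`. Moreover `R ≠ G[A,B]` since `R` meets some cycle oddly, and `R ≠ G`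
since a Hamilton cycle has odd length `n`.
-/

open scoped symmDiff

section Parity

variable {β : Type*}

lemma Set.indicator_symmDiff_one_zmod_two (s t : Set β) (x : β) :
    (s ∆ t).indicator (1 : β → ZMod 2) x = s.indicator 1 x + t.indicator 1 x := by
  by_cases hs : x ∈ s <;> by_cases ht : x ∈ t <;> simp [Set.mem_symmDiff, hs, ht]
  decide

lemma Set.ncard_symmDiff_add_two_mul_ncard_inter [Finite β] (s t : Set β) :
    (s ∆ t).ncard + 2 * (s ∩ t).ncard = s.ncard + t.ncard := by
  have hsdiff := Set.ncard_sdiff_add_ncard_of_subset (inf_le_sup : s ⊓ t ≤ s ⊔ t)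
  have hunion := Set.ncard_union_add_ncard_inter s t
  rw [symmDiff_eq_sup_sdiff_inf]
  simp only [Set.sup_eq_union, Set.inf_eq_inter] at *
  omega

lemma List.ncard_setOf_mem_and_mem {R : Type*} [AddCommMonoidWithOne R] {l : List β}
    (hl : l.Nodup) (s : Set β) :
    ({x | x ∈ l ∧ x ∈ s}.ncard : R) = (l.map (s.indicator 1)).sum := by
  classical
  have : {x | x ∈ l ∧ x ∈ s} = ↑(l.toFinset.filter (· ∈ s)) := by ext; simp
  rw [this, Set.ncard_coe_finset, Finset.card_filter, Nat.cast_sum, List.sum_toFinset _ hl]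
  congr 2 with x
  simp [Set.indicator_apply]

end Parity

namespace SimpleGraph

variable {α : Type} {G H K : SimpleGraph α}

lemma edgeSet_symmDiff : (H ∆ K).edgeSet = H.edgeSet ∆ K.edgeSet := by
  rw [symmDiff_def, edgeSet_sup, edgeSet_sdiff, edgeSet_sdiff, Set.symmDiff_def]

lemma bipSub_le (A B : Set α) : bipSub G A B ≤ G := fun _ _ h => h.1

lemma bipSub_eq_inf (hH : H ≤ G) (A B : Set α) : bipSub H A B = H ⊓ bipSub G A B := by
  ext x y
  simp only [bipSub, inf_adj]
  constructor
  · rintro ⟨h, hAB⟩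
    exact ⟨h, hH h, hAB⟩
  · rintro ⟨h, -, hAB⟩
    exact ⟨h, hAB⟩

lemma edgeSet_bipSub (A B : Set α) :
    (bipSub G A B).edgeSet = {e | e ∈ G.edgeSet ∧ ∃ a ∈ A, ∃ b ∈ B, e = s(a, b)} := by
  ext e
  induction e with
  | _ x y =>
    simp only [mem_edgeSet, bipSub, Set.mem_ofPred_eq, Sym2.eq_iff]
    constructor
    · rintro ⟨h, ⟨hx, hy⟩ | ⟨hx, hy⟩⟩
      · exact ⟨h, x, hx, y, hy, Or.inl ⟨rfl, rfl⟩⟩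
      · exact ⟨h, y, hy, x, hx, Or.inr ⟨rfl, rfl⟩⟩
    · rintro ⟨h, a, ha, b, hb, ⟨rfl, rfl⟩ | ⟨rfl, rfl⟩⟩
      · exact ⟨h, Or.inl ⟨ha, hb⟩⟩
      · exact ⟨h, Or.inr ⟨hb, ha⟩⟩

lemma eCnt_eq_ncard_edgeSet_bipSub (A B : Set α) :
    eCnt G A B = (bipSub G A B).edgeSet.ncard := by
  rw [eCnt, edgeSet_bipSub]

lemma indicator_edgeSet_bipSub_compl {A : Set α} {x y : α} (h : G.Adj x y) :
    (bipSub G A Aᶜ).edgeSet.indicator 1 s(x, y) =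
      A.indicator (1 : α → ZMod 2) x + A.indicator 1 y := by
  by_cases hx : x ∈ A <;> by_cases hy : y ∈ A <;>
    simp [bipSub, h, hx, hy]
  decide

namespace Walk

variable {u v : α}

noncomputable def parityIn (p : G.Walk u v) (H : SimpleGraph α) : ZMod 2 :=
  (p.edges.map (H.edgeSet.indicator 1)).sum

@[simp]
lemma parityIn_nil (H : SimpleGraph α) : (nil : G.Walk u u).parityIn H = 0 := rfl

lemma parityIn_cons {w : α} (h : G.Adj u v) (p : G.Walk v w) (H : SimpleGraph α) :
    (cons h p).parityIn H = H.edgeSet.indicator 1 s(u, v) + p.parityIn H := by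
  simp [parityIn]

lemma parityIn_symmDiff (p : G.Walk u v) (H K : SimpleGraph α) :
    p.parityIn (H ∆ K) = p.parityIn H + p.parityIn K := by
  rw [parityIn, parityIn, parityIn, ← List.sum_map_add, edgeSet_symmDiff]
  exact congrArg _ (List.map_congr_left fun e _ => Set.indicator_symmDiff_one_zmod_two _ _ e)

lemma parityIn_self (p : G.Walk u v) : p.parityIn G = p.length := by
  have : p.edges.map (G.edgeSet.indicator 1) = p.edges.map (fun _ => (1 : ZMod 2)) :=
    List.map_congr_left fun e he => Set.indicator_of_mem (p.edges_subset_edgeSet he) _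
  rw [parityIn, this, List.map_const', List.sum_replicate, length_edges, nsmul_one]

lemma ncard_setOf_mem_edges_and_mem_edgeSet (p : G.Walk u v) (hp : p.edges.Nodup)
    (H : SimpleGraph α) :
    ({e | e ∈ p.edges ∧ e ∈ H.edgeSet}.ncard : ZMod 2) = p.parityIn H :=
  List.ncard_setOf_mem_and_mem hp _

lemma parityIn_bipSub_compl (A : Set α) (p : G.Walk u v) :
    p.parityIn (bipSub G A Aᶜ) = A.indicator 1 u + A.indicator 1 v := by
  induction p with
  | nil => simp [CharTwo.add_self_eq_zero]
  | @cons x y z h p ih =>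
    rw [parityIn_cons, ih, indicator_edgeSet_bipSub_compl h]
    linear_combination CharTwo.add_self_eq_zero (A.indicator (1 : α → ZMod 2) y)

lemma parityIn_bipSub_compl_of_closed (A : Set α) (c : G.Walk u u) :
    c.parityIn (bipSub G A Aᶜ) = 0 := by
  rw [parityIn_bipSub_compl, CharTwo.add_self_eq_zero]

end Walk

lemma edgeIndicator_eq_sum [DecidableEq α] (l : List (Sym2 α)) :
    edgeIndicator l = ∑ e ∈ l.toFinset, Pi.single e 1 := by
  funext x
  simp [edgeIndicator, Pi.single_apply]

lemma map_edgeIndicator_of_nodup [DecidableEq α] (φ : Module.Dual (ZMod 2) (Sym2 α → ZMod 2))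
    {l : List (Sym2 α)} (hl : l.Nodup) :
    φ (edgeIndicator l) = (l.map fun e => φ (Pi.single e 1)).sum := by
  rw [edgeIndicator_eq_sum, map_sum, List.sum_toFinset _ hl]

lemma Walk.map_edgeIndicator_eq_parityIn [DecidableEq α]
    (φ : Module.Dual (ZMod 2) (Sym2 α → ZMod 2)) {u v : α} (p : G.Walk u v)
    (hp : p.edges.Nodup) :
    φ (edgeIndicator p.edges) = p.parityIn (G.deleteEdges {e | φ (Pi.single e 1) = 0}) := by
  rw [map_edgeIndicator_of_nodup φ hp, parityIn]
  refine congrArg _ (List.map_congr_left fun e he => ?_)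
  have hG := p.edges_subset_edgeSet he
  rw [edgeSet_deleteEdges]
  by_cases h : φ (Pi.single e 1) = 0
  · simp [h]
  · have h1 : φ (Pi.single e 1) = 1 := Fin.eq_one_of_ne_zero _ h
    simp [h1, hG]

/-- `H` is the support of a functional on the edge space of `G` vanishing on `C_n(G)` but not on
`C(G)`. -/
structure IsSeparating [Fintype α] (G H : SimpleGraph α) : Prop where
  le : H ≤ G
  parityIn_eq_zero :
    ∀ (u : α) (c : G.Walk u u), c.IsCycle → c.length = Fintype.card α → c.parityIn H = 0
  exists_parityIn_eq_one : ∃ (u : α) (c : G.Walk u u), c.IsCycle ∧ c.parityIn H = 1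

variable [Fintype α]

lemma exists_isSeparating [DecidableEq α]
    (hneq : cycleSpaceLen G (Fintype.card α) ≠ cycleSpace G) : ∃ H, IsSeparating G H := by
  have hle : cycleSpaceLen G (Fintype.card α) ≤ cycleSpace G :=
    Submodule.span_mono fun _ ⟨u, c, hc, _, hf⟩ => ⟨u, c, hc, hf⟩
  obtain ⟨x, hxC, hxL⟩ := SetLike.exists_of_lt (lt_of_le_of_ne hle hneq)
  obtain ⟨φ, hφx, hφL⟩ := Submodule.exists_dual_map_eq_bot_of_notMem hxL inferInstance
  replace hφL : cycleSpaceLen G (Fintype.card α) ≤ LinearMap.ker φ :=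
    LinearMap.le_ker_iff_map.2 hφL
  obtain ⟨u, c, hc, hφc⟩ :
      ∃ (u : α) (c : G.Walk u u), c.IsCycle ∧ φ (edgeIndicator c.edges) ≠ 0 := by
    by_contra! h
    have hC : cycleSpace G ≤ LinearMap.ker φ := by
      refine Submodule.span_le.2 ?_
      rintro _ ⟨u, c, hc, rfl⟩
      exact h u c hc
    exact hφx (hC hxC)
  refine ⟨G.deleteEdges {e | φ (Pi.single e 1) = 0}, G.deleteEdges_le _, fun u c hc hlen => ?_,
    u, c, hc, ?_⟩
  · rw [← c.map_edgeIndicator_eq_parityIn φ hc.edges_nodup]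
    exact hφL (Submodule.subset_span ⟨u, c, hc, hlen, rfl⟩)
  · rw [← c.map_edgeIndicator_eq_parityIn φ hc.edges_nodup]
    exact Fin.eq_one_of_ne_zero _ hφc

lemma IsSeparating.symmDiff (hH : IsSeparating G H) (hK : K ≤ G)
    (hKc : ∀ (u : α) (c : G.Walk u u), c.parityIn K = 0) : IsSeparating G (H ∆ K) := by
  obtain ⟨hle, heven, u, c, hc, hodd⟩ := hH
  refine ⟨symmDiff_le_sup.trans (sup_le hle hK), fun v d hd hlen => ?_, u, c, hc, ?_⟩
  · rw [Walk.parityIn_symmDiff, heven v d hd hlen, hKc, add_zero]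
  · rw [Walk.parityIn_symmDiff, hodd, hKc, add_zero]

lemma IsSeparating.ne (hH : IsSeparating G H)
    (hKc : ∀ (u : α) (c : G.Walk u u), c.parityIn K = 0) : H ≠ K := by
  rintro rfl
  obtain ⟨u, c, -, hc⟩ := hH.exists_parityIn_eq_one
  exact zero_ne_one ((hKc u c).symm.trans hc)

lemma IsSeparating.ne_of_odd_card [DecidableEq α] (hH : IsSeparating G H)
    (hodd : Odd (Fintype.card α)) (hham : ∃ (u : α) (c : G.Walk u u), c.IsHamiltonianCycle) :
    H ≠ G := by
  rintro rfl
  obtain ⟨u, c, hc⟩ := hham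
  have := hH.parityIn_eq_zero u c hc.isCycle hc.length_eq
  rw [c.parityIn_self, hc.length_eq, ZMod.natCast_eq_zero_iff_even] at this
  exact Nat.not_even_iff_odd.2 hodd this

lemma IsSeparating.ncard_edgeSet_le (hH : IsSeparating G H)
    (hmax : ∀ H', IsSeparating G H' → H'.edgeSet.ncard ≤ H.edgeSet.ncard) (hK : K ≤ G)
    (hKc : ∀ (u : α) (c : G.Walk u u), c.parityIn K = 0) :
    K.edgeSet.ncard ≤ 2 * (H ⊓ K).edgeSet.ncard := by
  have hle := hmax _ (hH.symmDiff hK hKc)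
  have hcard := Set.ncard_symmDiff_add_two_mul_ncard_inter H.edgeSet K.edgeSet
  rw [edgeSet_symmDiff] at hle
  rw [edgeSet_inf]
  omega

end SimpleGraph

theorem stmt0 (G : SimpleGraph V)
    (hodd : Odd (Fintype.card V))
    (hham : ∃ (u : V) (c : G.Walk u u), c.IsHamiltonianCycle)
    (hneq : cycleSpaceLen G (Fintype.card V) ≠ cycleSpace G) :
    ∃ R : SimpleGraph V, R ≤ G ∧ R ≠ G ∧
      (∀ (u : V) (c : G.Walk u u), c.IsHamiltonianCycle →
        Even ({e : Sym2 V | e ∈ c.edges ∧ e ∈ R.edgeSet}.ncard)) ∧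
      (∀ A B : Set V, A ∪ B = Set.univ → Disjoint A B →
        eCnt G A B ≤ 2 * eCnt R A B ∧ R ≠ bipSub G A B) := by
  obtain ⟨R, hR, hmax⟩ := Set.exists_max_image {H | IsSeparating G H} (fun H => H.edgeSet.ncard)
    (Set.toFinite _) (exists_isSeparating hneq)
  refine ⟨R, hR.le, hR.ne_of_odd_card hodd hham, fun u c hc => ?_, fun A B hU hD => ?_⟩
  · rw [← ZMod.natCast_eq_zero_iff_even,
      c.ncard_setOf_mem_edges_and_mem_edgeSet hc.isCycle.edges_nodup]
    exact hR.parityIn_eq_zero u c hc.isCycle hc.length_eq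
  · obtain rfl : B = Aᶜ := (IsCompl.compl_eq ⟨hD, codisjoint_iff.2 hU⟩).symm
    have hcut := fun u (c : G.Walk u u) => c.parityIn_bipSub_compl_of_closed A
    rw [eCnt_eq_ncard_edgeSet_bipSub, eCnt_eq_ncard_edgeSet_bipSub, bipSub_eq_inf hR.le]
    exact ⟨hR.ncard_edgeSet_le hmax (bipSub_le A Aᶜ) hcut, hR.ne hcut⟩
end

section
/- Let n = 4k+1 with k ≥ 2, and let X, Y be disjoint sets with |X| = 2k+1 and |Y| = 2k. Pick a_1, a_2 ∈ X and b_1, b_2 ∈ Y. Let G_1 be the graph on X ∪ Y whose edge set is all pairs {x,y} with x ∈ X, y ∈ Y together with the two edges a_1a_2 and b_1b_2. Then every Hamilton cycle of G_1 avoids the edge b_1b_2; consequently G_1 is not Hamilton-generated, i.e., C_n(G_1) ≠ C(G_1). -/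
open SimpleGraph

variable {V : Type} [Fintype V] [DecidableEq V]

/-! In a Hamilton cycle every vertex of `Y` is an endpoint of exactly two cycle edges, so the
`n = 4k + 1` cycle edges have `2|Y| = 4k` endpoints in `Y` in total. Every edge of `G₁` has
exactly one endpoint in `Y`, except `a₁a₂` (none) and `b₁b₂` (two); hence a Hamilton cycle uses
`a₁a₂` once more often than `b₁b₂`, so it avoids `b₁b₂`. The Hamilton cycles therefore span
only vectors vanishing at `b₁b₂`, while the triangle `b₁ a₁ b₂` does not. -/

def Sym2.endpointSum {α : Type*} (f : α → ℕ) : Sym2 α → ℕ :=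
  Sym2.lift ⟨fun x y => f x + f y, fun _ _ => add_comm _ _⟩

@[simp]
lemma Sym2.endpointSum_mk {α : Type*} (f : α → ℕ) (x y : α) :
    Sym2.endpointSum f s(x, y) = f x + f y := rfl

namespace SimpleGraph.Walk

variable {α : Type*} {G : SimpleGraph α}

lemma sum_endpointSum_edges_add (f : α → ℕ) {u v : α} (p : G.Walk u v) :
    (p.edges.map (Sym2.endpointSum f)).sum + f u + f v = 2 * (p.support.map f).sum := by
  induction p with
  | nil => simp [two_mul]
  | cons h p ih =>
    simp only [edges_cons, support_cons, List.map_cons, List.sum_cons, Sym2.endpointSum_mk]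
    omega

lemma IsHamiltonianCycle.sum_endpointSum_edges [Fintype α] [DecidableEq α] {u : α}
    {c : G.Walk u u} (hc : c.IsHamiltonianCycle) (f : α → ℕ) :
    ∑ e ∈ c.edges.toFinset, Sym2.endpointSum f e = 2 * ∑ v, f v := by
  have hsum_tail : (c.tail.support.map f).sum = ∑ v, f v := by
    rw [← List.sum_toFinset _ hc.isHamiltonian_tail.isPath.support_nodup,
      hc.isHamiltonian_tail.toFinset_support]
  have hclosed := c.sum_endpointSum_edges_add f
  rw [← c.cons_support_tail hc.not_nil, List.map_cons, List.sum_cons] at hclosed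
  rw [List.sum_toFinset (Sym2.endpointSum f) hc.edges_nodup]
  omega

lemma IsHamiltonianCycle.notMem_edges_of_endpointSum [Fintype α] [DecidableEq α]
    (f : α → ℕ) (hcard : Fintype.card α = 2 * ∑ v, f v + 1) (a b : Sym2 α)
    (hedge : ∀ x y, G.Adj x y → Sym2.endpointSum f s(x, y) + (if s(x, y) = a then 1 else 0)
      = 1 + (if s(x, y) = b then 1 else 0))
    {u : α} {c : G.Walk u u} (hc : c.IsHamiltonianCycle) : b ∉ c.edges := by
  intro hb
  have hweights : ∑ e ∈ c.edges.toFinset, (Sym2.endpointSum f e + if e = a then 1 else 0)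
      = ∑ e ∈ c.edges.toFinset, (1 + if e = b then 1 else 0) := by
    refine Finset.sum_congr rfl fun e he => ?_
    induction e using Sym2.ind with
    | _ x y => exact hedge x y (c.adj_of_mem_edges (List.mem_toFinset.1 he))
  -- summed over the `n` cycle edges this reads `(n - 1) + [a ∈ c] = n + 1`
  simp only [Finset.sum_add_distrib, Finset.sum_ite_eq', Finset.sum_const, smul_eq_mul,
    mul_one, hc.sum_endpointSum_edges, List.toFinset_card_of_nodup hc.edges_nodup,
    c.length_edges, hc.length_eq, List.mem_toFinset, hb, if_true] at hweights
  split_ifs at hweights <;> omega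

lemma isCycle_triangle {a b c : α} (hab : G.Adj a b) (hbc : G.Adj b c) (hca : G.Adj c a) :
    (cons hab (cons hbc (cons hca nil))).IsCycle := by
  simp [cons_isCycle_iff, hab.ne, hbc.ne, hca.ne, hab.ne.symm, hca.ne.symm]

end SimpleGraph.Walk

lemma cycleSpaceLen_ne_cycleSpace {α : Type} [DecidableEq α] {G : SimpleGraph α} {k : ℕ}
    {e : Sym2 α} (havoid : ∀ (u : α) (c : G.Walk u u), c.IsCycle → c.length = k → e ∉ c.edges)
    {u : α} {c : G.Walk u u} (hc : c.IsCycle) (he : e ∈ c.edges) :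
    cycleSpaceLen G k ≠ cycleSpace G := by
  have hle : cycleSpaceLen G k ≤ LinearMap.ker (LinearMap.proj e) := by
    rw [cycleSpaceLen, Submodule.span_le]
    rintro _ ⟨v, d, hd, hlen, rfl⟩
    simp [edgeIndicator, havoid v d hd hlen]
  intro heq
  have hmem : edgeIndicator c.edges ∈ cycleSpaceLen G k :=
    heq ▸ Submodule.subset_span ⟨u, c, hc, rfl⟩
  simpa [edgeIndicator, he] using hle hmem

lemma endpointSum_indicator_of_adj {α : Type*} [DecidableEq α] (X Y : Set α)
    (hdis : Disjoint X Y) (a1 a2 b1 b2 : α)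
    (ha1 : a1 ∈ X) (ha2 : a2 ∈ X) (hb1 : b1 ∈ Y) (hb2 : b2 ∈ Y) (G1 : SimpleGraph α)
    (hG1 : ∀ x y, G1.Adj x y ↔
      ((x ∈ X ∧ y ∈ Y) ∨ (x ∈ Y ∧ y ∈ X) ∨
        ({x, y} : Set α) = {a1, a2} ∨ ({x, y} : Set α) = {b1, b2})) {x y : α} (hxy : G1.Adj x y) :
    Sym2.endpointSum (Y.indicator 1) s(x, y) + (if s(x, y) = s(a1, a2) then 1 else 0)
      = 1 + (if s(x, y) = s(b1, b2) then 1 else 0) := by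
  have hXY : ∀ v ∈ X, v ∉ Y := fun v hv => Set.disjoint_left.mp hdis hv
  rcases (hG1 x y).1 hxy with ⟨hx, hy⟩ | ⟨hx, hy⟩ | h | h <;>
    aesop (add simp [Sym2.eq_iff, Set.indicator_apply, Set.pair_eq_pair_iff])

theorem stmt2_general (k : ℕ)
    (X Y : Set V) (hdis : Disjoint X Y) (hun : X ∪ Y = Set.univ)
    (hX : X.ncard = 2 * k + 1) (hY : Y.ncard = 2 * k)
    (a1 a2 b1 b2 : V)
    (ha1 : a1 ∈ X) (ha2 : a2 ∈ X) (hb1 : b1 ∈ Y) (hb2 : b2 ∈ Y)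
    (G1 : SimpleGraph V)
    (hG1 : ∀ x y, G1.Adj x y ↔
      ((x ∈ X ∧ y ∈ Y) ∨ (x ∈ Y ∧ y ∈ X) ∨
        ({x, y} : Set V) = {a1, a2} ∨ ({x, y} : Set V) = {b1, b2})) :
    (∀ (u : V) (c : G1.Walk u u), c.IsHamiltonianCycle → s(b1, b2) ∉ c.edges) ∧
      cycleSpaceLen G1 (Fintype.card V) ≠ cycleSpace G1 := by
  have hcard : Fintype.card V = 2 * ∑ v, Y.indicator 1 v + 1 := by
    have hsplit : Fintype.card V = X.ncard + Y.ncard := by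
      rw [← Set.ncard_union_eq hdis, hun, Set.ncard_univ, Nat.card_eq_fintype_card]
    have hYsum : ∑ v, Y.indicator 1 v = Y.ncard := by
      classical
      simp only [Set.indicator_apply, Pi.one_apply, Finset.sum_boole, Nat.cast_id,
        Set.ncard_eq_toFinset_card', Set.toFinset_card, Fintype.card_ofFinset]
    omega
  have havoid (u : V) (c : G1.Walk u u) (hc : c.IsHamiltonianCycle) : s(b1, b2) ∉ c.edges :=
    hc.notMem_edges_of_endpointSum _ hcard _ _
      (fun _ _ => endpointSum_indicator_of_adj X Y hdis a1 a2 b1 b2 ha1 ha2 hb1 hb2 G1 hG1)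
  have hb1a1 : G1.Adj b1 a1 := (hG1 b1 a1).2 (.inr (.inl ⟨hb1, ha1⟩))
  have ha1b2 : G1.Adj a1 b2 := (hG1 a1 b2).2 (.inl ⟨ha1, hb2⟩)
  have hb2b1 : G1.Adj b2 b1 := (hG1 b2 b1).2 (.inr (.inr (.inr (Set.pair_comm b2 b1))))
  refine ⟨havoid, cycleSpaceLen_ne_cycleSpace
    (fun u c hc hlen => havoid u c (Walk.isHamiltonianCycle_iff_isCycle_and_length_eq.2 ⟨hc, hlen⟩))
    (Walk.isCycle_triangle hb1a1 ha1b2 hb2b1) (by simp)⟩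

/-- Construction A, graph `G₁`: the complete bipartite graph between `X` and `Y`
together with the two edges `a₁a₂` and `b₁b₂`.  Every Hamilton cycle avoids `b₁b₂`,
and `G₁` is not Hamilton-generated. -/
theorem stmt2 (k : ℕ) (hk : 2 ≤ k)
    (X Y : Set V) (hdis : Disjoint X Y) (hun : X ∪ Y = Set.univ)
    (hX : X.ncard = 2 * k + 1) (hY : Y.ncard = 2 * k)
    (a1 a2 b1 b2 : V)
    (ha1 : a1 ∈ X) (ha2 : a2 ∈ X) (hb1 : b1 ∈ Y) (hb2 : b2 ∈ Y)
    (hane : a1 ≠ a2) (hbne : b1 ≠ b2)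
    (G1 : SimpleGraph V)
    (hG1 : ∀ x y, G1.Adj x y ↔
      ((x ∈ X ∧ y ∈ Y) ∨ (x ∈ Y ∧ y ∈ X) ∨
        ({x, y} : Set V) = {a1, a2} ∨ ({x, y} : Set V) = {b1, b2})) :
    (∀ (u : V) (c : G1.Walk u u), c.IsHamiltonianCycle → s(b1, b2) ∉ c.edges) ∧
      cycleSpaceLen G1 (Fintype.card V) ≠ cycleSpace G1 :=
  stmt2_general k X Y hdis hun hX hY a1 a2 b1 b2 ha1 ha2 hb1 hb2 G1 hG1
end

section
/- Let m, d be positive integers and ℓ ≤ ⌈m/(d+1)⌉. If a graph G is (m,d)-connected, then for any ℓ disjoint pairs of vertices (u_1,v_1), ..., (u_ℓ, v_ℓ) in G (all 2ℓ vertices distinct), there exist ℓ pairwise vertex-disjoint paths P_1, ..., P_ℓ, each of length at most d, such that P_i connects u_i and v_i for each i. -/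
open SimpleGraph

variable {V : Type} [Fintype V] [DecidableEq V]

/-- A graph is `(m,d)`-connected if after deleting any set of at most `m` vertices,
the remaining graph is connected with diameter at most `d`. -/
def mdConnected {W : Type} (G : SimpleGraph W) (m d : ℕ) : Prop :=
  ∀ U : Set W, U.ncard ≤ m →
    (G.induce Uᶜ).Connected ∧ ∀ x y : ↥(Uᶜ), (G.induce Uᶜ).dist x y ≤ d

/-!
The paths are built greedily. When the path for the pair `k` is chosen, delete the vertices of
the paths built so far together with the endpoints of the pairs still waiting; every other pair
accounts for at most `d + 1` deleted vertices, so at most `(ℓ - 1)(d + 1) ≤ m` vertices are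
deleted, and a path of length at most `d` joining `u k` and `v k` survives in what remains.
-/

section Linkage

variable {W : Type} {G : SimpleGraph W} {m d : ℕ}

theorem mdConnected.exists_isPath_avoiding (hG : mdConnected G m d) {U : Set W}
    (hU : U.ncard ≤ m) {x y : W} (hx : x ∉ U) (hy : y ∉ U) :
    ∃ p : G.Walk x y, p.IsPath ∧ p.length ≤ d ∧ ∀ z ∈ p.support, z ∉ U := by
  obtain ⟨hconn, hdiam⟩ := hG U hU
  obtain ⟨p, hp, hlen⟩ := hconn.exists_path_of_dist ⟨x, hx⟩ ⟨y, hy⟩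
  let f : G.induce Uᶜ ↪g G := Embedding.induce Uᶜ
  refine ⟨p.map f.toHom, hp.map f.injective, ?_, fun z hz => ?_⟩
  · exact (Walk.length_map _ _).trans_le (hlen ▸ hdiam _ _)
  · have hz' : z ∈ (p.map f.toHom).support := hz
    rw [Walk.support_map, List.mem_map] at hz'
    obtain ⟨z, -, rfl⟩ := hz'
    exact z.2

variable {ι : Type} {u v : ι → W}

/-- The last clause keeps the endpoints of the pairs not linked yet available for later steps. -/
def IsPartialLinkage (G : SimpleGraph W) (d : ℕ) (u v : ι → W)
    (P : ∀ i, G.Walk (u i) (v i)) (s : Finset ι) : Prop :=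
  (∀ i ∈ s, (P i).IsPath ∧ (P i).length ≤ d) ∧
  (∀ i ∈ s, ∀ j ∈ s, i ≠ j → ∀ x ∈ (P i).support, x ∉ (P j).support) ∧
  ∀ i ∈ s, ∀ j ∉ s, u j ∉ (P i).support ∧ v j ∉ (P i).support

variable [DecidableEq ι]

theorem IsPartialLinkage.update {P : ∀ i, G.Walk (u i) (v i)} {s : Finset ι}
    (hP : IsPartialLinkage G d u v P s) {k : ι} (hk : k ∉ s) {p : G.Walk (u k) (v k)}
    (hp : p.IsPath) (hplen : p.length ≤ d) (hpP : ∀ j ∈ s, ∀ x ∈ p.support, x ∉ (P j).support)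
    (hpend : ∀ j ∉ insert k s, u j ∉ p.support ∧ v j ∉ p.support) :
    IsPartialLinkage G d u v (Function.update P k p) (insert k s) := by
  obtain ⟨hshort, hdisj, havoid⟩ := hP
  have hupd : ∀ i ∈ s, Function.update P k p i = P i := fun i hi =>
    Function.update_of_ne (ne_of_mem_of_not_mem hi hk) _ _
  refine ⟨fun i hi => ?_, fun i hi j hj hij => ?_, fun i hi j hj => ?_⟩
  · rcases Finset.mem_insert.mp hi with rfl | his
    · rw [Function.update_self]
      exact ⟨hp, hplen⟩
    · rw [hupd i his]
      exact hshort i his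
  · rcases Finset.mem_insert.mp hi with hik | his <;>
      rcases Finset.mem_insert.mp hj with hjk | hjs
    · exact absurd (hik.trans hjk.symm) hij
    · subst hik
      rw [Function.update_self, hupd j hjs]
      exact hpP j hjs
    · subst hjk
      rw [Function.update_self, hupd i his]
      exact fun x hxi hxp => hpP i his x hxp hxi
    · rw [hupd i his, hupd j hjs]
      exact hdisj i his j hjs hij
  · rcases Finset.mem_insert.mp hi with rfl | his
    · rw [Function.update_self]
      exact hpend j hj
    · rw [hupd i his]
      exact havoid i his j fun hjs => hj (Finset.mem_insert_of_mem hjs)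

variable [DecidableEq W]

def blockedBy (P : ∀ i, G.Walk (u i) (v i)) (s : Finset ι) (j : ι) : Finset W :=
  if j ∈ s then (P j).support.toFinset else {u j, v j}

theorem IsPartialLinkage.card_blockedBy_le {P : ∀ i, G.Walk (u i) (v i)} {s : Finset ι}
    (hP : IsPartialLinkage G d u v P s) (hd : 0 < d) (j : ι) :
    (blockedBy P s j).card ≤ d + 1 := by
  by_cases hj : j ∈ s
  · simp only [blockedBy, if_pos hj]
    have := (hP.1 j hj).2
    grind [List.toFinset_card_le, Walk.length_support]
  · simp only [blockedBy, if_neg hj]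
    have := Finset.card_le_two (a := u j) (b := v j)
    omega

theorem IsPartialLinkage.endpoint_notMem_blockedBy {P : ∀ i, G.Walk (u i) (v i)}
    {s : Finset ι} (hP : IsPartialLinkage G d u v P s)
    (hend : Function.Injective (fun p : ι × Bool => if p.2 then u p.1 else v p.1))
    {j k : ι} (hk : k ∉ s) (hjk : j ≠ k) (b : Bool) :
    (if b then u k else v k) ∉ blockedBy P s j := by
  intro hmem
  by_cases hjs : j ∈ s
  · simp only [blockedBy, if_pos hjs, List.mem_toFinset] at hmem
    cases b
    exacts [(hP.2.2 j hjs k hk).2 hmem, (hP.2.2 j hjs k hk).1 hmem]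
  · simp only [blockedBy, if_neg hjs, Finset.mem_insert, Finset.mem_singleton] at hmem
    obtain ⟨a, ha⟩ : ∃ a : Bool, (if b then u k else v k) = if a then u j else v j := by
      rcases hmem with h | h
      exacts [⟨true, h⟩, ⟨false, h⟩]
    exact hjk (congrArg Prod.fst (hend (a₁ := (j, a)) (a₂ := (k, b)) ha.symm))

variable [Fintype ι]

theorem IsPartialLinkage.exists_path_avoiding (hG : mdConnected G m d) (hd : 0 < d)
    (hend : Function.Injective (fun p : ι × Bool => if p.2 then u p.1 else v p.1))
    (hbudget : (Fintype.card ι - 1) * (d + 1) ≤ m)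
    {P : ∀ i, G.Walk (u i) (v i)} {s : Finset ι} (hP : IsPartialLinkage G d u v P s)
    {k : ι} (hk : k ∉ s) :
    ∃ p : G.Walk (u k) (v k), p.IsPath ∧ p.length ≤ d ∧
      (∀ j ∈ s, ∀ x ∈ p.support, x ∉ (P j).support) ∧
      ∀ j ∉ insert k s, u j ∉ p.support ∧ v j ∉ p.support := by
  let U : Finset W := (Finset.univ.erase k).biUnion (blockedBy P s)
  have hU : (U : Set W).ncard ≤ m := by
    rw [Set.ncard_coe_finset]
    calc U.card ≤ (Finset.univ.erase k).card * (d + 1) :=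
          Finset.card_biUnion_le_card_mul _ _ _ fun j _ => hP.card_blockedBy_le hd j
      _ = (Fintype.card ι - 1) * (d + 1) := by
          rw [Finset.card_erase_of_mem (Finset.mem_univ k), Finset.card_univ]
      _ ≤ m := hbudget
  have hmemU : ∀ j ≠ k, ∀ x ∈ blockedBy P s j, x ∈ U := fun j hjk x hx =>
    Finset.mem_biUnion.mpr ⟨j, Finset.mem_erase.mpr ⟨hjk, Finset.mem_univ _⟩, hx⟩
  have hfree : ∀ b : Bool, (if b then u k else v k) ∉ (U : Set W) := fun b hmem => by
    obtain ⟨j, hj, hmem⟩ := Finset.mem_biUnion.mp hmem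
    exact hP.endpoint_notMem_blockedBy hend hk (Finset.ne_of_mem_erase hj) b hmem
  obtain ⟨p, hp, hplen, hpU⟩ := hG.exists_isPath_avoiding hU (hfree true) (hfree false)
  refine ⟨p, hp, hplen, fun j hj x hx hxj => ?_, fun j hj => ?_⟩
  · exact hpU x hx (hmemU j (ne_of_mem_of_not_mem hj hk) x (by simpa [blockedBy, hj] using hxj))
  · obtain ⟨hjk, hjs⟩ := not_or.mp (Finset.mem_insert.not.mp hj)
    exact ⟨fun h => hpU _ h (hmemU j hjk _ (by simp [blockedBy, hjs])),
      fun h => hpU _ h (hmemU j hjk _ (by simp [blockedBy, hjs]))⟩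

theorem exists_partialLinkage (hG : mdConnected G m d) (hd : 0 < d)
    (hend : Function.Injective (fun p : ι × Bool => if p.2 then u p.1 else v p.1))
    (hbudget : (Fintype.card ι - 1) * (d + 1) ≤ m) (s : Finset ι) :
    ∃ P : ∀ i, G.Walk (u i) (v i), IsPartialLinkage G d u v P s := by
  induction s using Finset.induction_on with
  | empty =>
    exact ⟨fun i => (hG.exists_isPath_avoiding (U := ∅) (x := u i) (y := v i)
      (by simp) (by simp) (by simp)).choose, by simp [IsPartialLinkage]⟩
  | insert k s hk ih =>
    obtain ⟨P, hP⟩ := ih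
    obtain ⟨p, hp, hplen, hpP, hpend⟩ := hP.exists_path_avoiding hG hd hend hbudget hk
    exact ⟨_, hP.update hk hp hplen hpP hpend⟩

end Linkage

theorem sub_one_mul_succ_le_of_le_ceil_div {m d ℓ : ℕ} (hℓ : ℓ ≤ ⌈(m : ℚ) / (d + 1)⌉₊) :
    (ℓ - 1) * (d + 1) ≤ m := by
  rcases Nat.eq_zero_or_pos ℓ with rfl | hpos
  · simp
  · have h : ((ℓ - 1 : ℕ) : ℚ) < m / (d + 1) := Nat.lt_ceil.mp (by omega)
    exact_mod_cast ((lt_div_iff₀ (by positivity)).mp h).le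

theorem stmt5_general (G : SimpleGraph V) (m d ℓ : ℕ) (hd : 0 < d)
    (hℓ : ℓ ≤ ⌈(m : ℚ) / (d + 1)⌉₊)
    (hG : mdConnected G m d)
    (u v : Fin ℓ → V)
    (hdisj : Function.Injective
      (fun p : Fin ℓ × Bool => if p.2 then u p.1 else v p.1)) :
    ∃ P : ∀ i : Fin ℓ, G.Walk (u i) (v i),
      (∀ i, (P i).IsPath ∧ (P i).length ≤ d) ∧
      ∀ i j, i ≠ j → ∀ x, x ∈ (P i).support → x ∉ (P j).support := by
  have hbudget : (Fintype.card (Fin ℓ) - 1) * (d + 1) ≤ m := by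
    simpa using sub_one_mul_succ_le_of_le_ceil_div hℓ
  obtain ⟨P, hshort, hdisjoint, -⟩ := exists_partialLinkage hG hd hdisj hbudget Finset.univ
  exact ⟨P, fun i => hshort i (Finset.mem_univ i),
    fun i j hij => hdisjoint i (Finset.mem_univ i) j (Finset.mem_univ j) hij⟩

/-- In an `(m,d)`-connected graph, any `ℓ ≤ ⌈m/(d+1)⌉` disjoint pairs of vertices can
be joined by pairwise disjoint paths of length at most `d`. -/
theorem stmt5 (G : SimpleGraph V) (m d ℓ : ℕ) (hm : 0 < m) (hd : 0 < d)
    (hℓ : ℓ ≤ ⌈(m : ℚ) / (d + 1)⌉₊)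
    (hG : mdConnected G m d)
    (u v : Fin ℓ → V)
    (hdisj : Function.Injective
      (fun p : Fin ℓ × Bool => if p.2 then u p.1 else v p.1)) :
    ∃ P : ∀ i : Fin ℓ, G.Walk (u i) (v i),
      (∀ i, (P i).IsPath ∧ (P i).length ≤ d) ∧
      ∀ i j, i ≠ j → ∀ x, x ∈ (P i).support → x ∉ (P j).support :=
  stmt5_general G m d ℓ hd hℓ hG u v hdisj
end

section
/- Let F be a union of vertex-disjoint paths (a linear forest) with k > 1 edges in a graph G of order n. If the minimum degree δ(G) ≥ (n+k)/2, then G has a Hamilton cycle containing all edges of F. -/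
/-!
Closure argument. For every `H ≥ G` we find a Hamilton cycle of `H` through `F`, by downward
induction on `H`. In the complete graph, lay the paths of `F` end to end and close up. If `H + uv`
has such a cycle using `uv`, deleting `uv` leaves a Hamilton path `u = x₀, …, x_{n-1} = v` of `H`
containing `F`. At least `deg u + deg v - (n - 1) ≥ k + 1` positions `i` have `u ~ x_{i+1}` and
`v ~ x_i`, while at most `k` of the edges `x_i x_{i+1}` belong to `F`; at any other such position,
`x₀ … x_i v … x_{i+1}` is a Hamilton cycle of `H` through `F`.
-/

open SimpleGraph

variable {V : Type} [Fintype V] [DecidableEq V]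

namespace List

variable {α : Type*} {l C D : List α} {a b : α} {e : Sym2 α}

def pathEdges : List α → List (Sym2 α)
  | a :: b :: l => s(a, b) :: pathEdges (b :: l)
  | _ => []

def cycleEdges : List α → List (Sym2 α)
  | [] => []
  | a :: l => pathEdges (a :: l ++ [a])

@[simp] lemma pathEdges_nil : pathEdges ([] : List α) = [] := rfl

@[simp] lemma pathEdges_singleton : pathEdges [a] = [] := rfl

@[simp] lemma pathEdges_cons_cons : pathEdges (a :: b :: l) = s(a, b) :: pathEdges (b :: l) := rfl

lemma mem_pathEdges_cons :
    e ∈ pathEdges (a :: l) ↔ (∃ b ∈ l.head?, e = s(a, b)) ∨ e ∈ pathEdges l := by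
  cases l <;> simp

lemma pathEdges_append_cons (C : List α) (b : α) (D : List α) :
    pathEdges (C ++ b :: D) = pathEdges (C ++ [b]) ++ pathEdges (b :: D) := by
  induction C with
  | nil => simp
  | cons a C ih => cases C <;> simp_all

lemma mem_pathEdges_concat :
    e ∈ pathEdges (C ++ [b]) ↔ e ∈ pathEdges C ∨ ∃ c ∈ C.getLast?, e = s(c, b) := by
  induction C with
  | nil => simp
  | cons a C ih =>
    rw [cons_append, mem_pathEdges_cons, ih, mem_pathEdges_cons]
    cases C <;> simp [or_assoc]

lemma mem_pathEdges_reverse : e ∈ pathEdges l.reverse ↔ e ∈ pathEdges l := by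
  induction l with
  | nil => simp
  | cons a l ih =>
    rw [reverse_cons, mem_pathEdges_concat, ih, getLast?_reverse, mem_pathEdges_cons]
    simp only [Sym2.eq_swap (a := a)]
    exact or_comm

lemma mem_pathEdges_iff_exists_append :
    e ∈ pathEdges l ↔ ∃ A x y B, l = A ++ x :: y :: B ∧ e = s(x, y) := by
  refine ⟨fun h => ?_, ?_⟩
  · induction l with
    | nil => simp at h
    | cons a l ih =>
      rcases mem_pathEdges_cons.1 h with ⟨b, hb, rfl⟩ | h
      · obtain ⟨B, rfl⟩ : ∃ B, l = b :: B := by cases l <;> simp_all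
        exact ⟨[], a, b, B, rfl, rfl⟩
      · obtain ⟨A, x, y, B, rfl, rfl⟩ := ih h
        exact ⟨a :: A, x, y, B, rfl, rfl⟩
  · rintro ⟨A, x, y, B, rfl, rfl⟩
    induction A with
    | nil => simp
    | cons a A ih => exact mem_pathEdges_cons.2 (.inr ih)

lemma mem_pathEdges_append_left (h : e ∈ pathEdges C) : e ∈ pathEdges (C ++ D) := by
  obtain ⟨A, x, y, B, rfl, rfl⟩ := mem_pathEdges_iff_exists_append.1 h
  exact mem_pathEdges_iff_exists_append.2 ⟨A, x, y, B ++ D, by simp, rfl⟩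

lemma mem_pathEdges_append_right (h : e ∈ pathEdges D) : e ∈ pathEdges (C ++ D) := by
  obtain ⟨A, x, y, B, rfl, rfl⟩ := mem_pathEdges_iff_exists_append.1 h
  exact mem_pathEdges_iff_exists_append.2 ⟨C ++ A, x, y, B, by simp, rfl⟩

lemma mem_pathEdges_iff_getElem :
    e ∈ pathEdges l ↔ ∃ (i : ℕ) (h : i + 1 < l.length), e = s(l[i], l[i + 1]) := by
  induction l with
  | nil => simp
  | cons a l ih =>
    rw [mem_pathEdges_cons, ih]
    cases l with
    | nil => simp
    | cons b l =>
      constructor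
      · rintro (⟨c, hc, rfl⟩ | ⟨i, hi, rfl⟩)
        · simp only [head?_cons, Option.mem_def, Option.some.injEq] at hc
          exact ⟨0, by simp, by simp [hc]⟩
        · exact ⟨i + 1, by simpa using hi, rfl⟩
      · rintro ⟨_ | i, hi, rfl⟩
        · simp
        · exact .inr ⟨i, by simpa using hi, rfl⟩

lemma mem_cycleEdges (hl : l ≠ []) :
    e ∈ cycleEdges l ↔ e ∈ pathEdges l ∨ e = s(l.getLast hl, l.head hl) := by
  obtain ⟨a, l, rfl⟩ := exists_cons_of_ne_nil hl
  rw [cycleEdges, mem_pathEdges_concat, getLast?_eq_getLast_of_ne_nil hl]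
  simp

lemma mem_cycleEdges_cons_append_cons {c d : α} :
    e ∈ cycleEdges (c :: C ++ d :: D) ↔
      e ∈ pathEdges (c :: C ++ [d]) ∨ e ∈ pathEdges (d :: D ++ [c]) := by
  have : cycleEdges (c :: C ++ d :: D) = pathEdges (c :: C ++ d :: (D ++ [c])) := by
    simp [cycleEdges]
  rw [this, pathEdges_append_cons, mem_append]
  exact .rfl

lemma mem_cycleEdges_append_comm : e ∈ cycleEdges (C ++ D) ↔ e ∈ cycleEdges (D ++ C) := by
  cases C with
  | nil => simp
  | cons c C =>
    cases D with
    | nil => simp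
    | cons d D =>
      rw [mem_cycleEdges_cons_append_cons, mem_cycleEdges_cons_append_cons, or_comm]

lemma exists_rotation_of_mem_cycleEdges (h : e ∈ cycleEdges l) :
    ∃ (L : List α) (hL : L ≠ []), L.Perm l ∧ (∀ e', e' ∈ cycleEdges L ↔ e' ∈ cycleEdges l) ∧
      e = s(L.getLast hL, L.head hL) := by
  have hl : l ≠ [] := by rintro rfl; simp [cycleEdges] at h
  rcases (mem_cycleEdges hl).1 h with h | rfl
  · obtain ⟨A, x, y, B, rfl, rfl⟩ := mem_pathEdges_iff_exists_append.1 h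
    have hrot : A ++ x :: y :: B = (A ++ [x]) ++ (y :: B) := by simp
    refine ⟨(y :: B) ++ (A ++ [x]), by simp, ?_, fun e' => ?_, by simp⟩
    · rw [hrot]; exact perm_append_comm
    · rw [hrot]; exact mem_cycleEdges_append_comm
  · exact ⟨l, hl, Perm.refl l, fun _ => Iff.rfl, rfl⟩

lemma getLast_head_notMem_pathEdges (hl : l.Nodup) (hne : l ≠ []) (h3 : 3 ≤ l.length) :
    s(l.getLast hne, l.head hne) ∉ pathEdges l := by
  rw [mem_pathEdges_iff_getElem]
  rintro ⟨i, hi, h⟩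
  rw [getLast_eq_getElem, head_eq_getElem, Sym2.eq_iff, hl.getElem_inj_iff, hl.getElem_inj_iff,
    hl.getElem_inj_iff, hl.getElem_inj_iff] at h
  omega

lemma mem_pathEdges_erase [DecidableEq α] (he : e ∈ pathEdges l) (ha : a ∉ e) :
    e ∈ pathEdges (l.erase a) := by
  by_cases hal : a ∈ l
  · obtain ⟨C, D, rfl, haC⟩ := eq_append_cons_of_mem hal
    rw [erase_append_right _ haC, erase_cons_head]
    rw [pathEdges_append_cons, mem_append, mem_pathEdges_concat, mem_pathEdges_cons] at he
    rcases he with (he | ⟨c, -, rfl⟩) | ⟨d, -, rfl⟩ | he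
    · exact mem_pathEdges_append_left he
    · exact absurd (Sym2.mem_mk_right c a) ha
    · exact absurd (Sym2.mem_mk_left a d) ha
    · exact mem_pathEdges_append_right he
  · rwa [erase_of_not_mem hal]

lemma mem_pathEdges_insert_before (he : e ∈ pathEdges (C ++ b :: D))
    (hC : ∀ c ∈ C.getLast?, e ≠ s(c, b)) : e ∈ pathEdges (C ++ a :: b :: D) := by
  rw [pathEdges_append_cons, mem_append, mem_pathEdges_concat] at he
  rw [pathEdges_append_cons, mem_append, mem_pathEdges_concat, pathEdges_cons_cons, mem_cons]
  rcases he with (he | ⟨c, hc, rfl⟩) | he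
  · exact .inl (.inl he)
  · exact absurd rfl (hC c hc)
  · exact .inr (.inr he)

lemma Nodup.length_eq_card [Fintype α] (hl : l.Nodup) (hmem : ∀ v, v ∈ l) :
    l.length = Fintype.card α := by
  classical
  simpa using Fintype.card_congr (hl.getEquivOfForallMemList l hmem)

lemma Nodup.bijOn_getD (hl : l.Nodup) (hmem : ∀ v, v ∈ l) (d : α) :
    Set.BijOn (fun i => l.getD i d) (Set.Iio l.length) Set.univ := by
  refine ⟨fun _ _ => trivial, fun i hi j hj hij => ?_, fun v _ => ?_⟩
  · simp only [Set.mem_Iio] at hi hj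
    dsimp only at hij
    rwa [getD_eq_getElem _ _ hi, getD_eq_getElem _ _ hj, hl.getElem_inj_iff] at hij
  · obtain ⟨i, hi, rfl⟩ := mem_iff_getElem.1 (hmem v)
    exact ⟨i, hi, getD_eq_getElem _ _ hi⟩

end List

theorem Set.InjOn.injOn_sym2_mk_succ {α : Type*} {f : ℕ → α} {n : ℕ}
    (hf : Set.InjOn f (Set.Iio n)) : Set.InjOn (fun i => s(f i, f (i + 1))) (Set.Iio (n - 1)) := by
  intro i hi j hj hij
  simp only [Set.mem_Iio] at hi hj
  have hinj : ∀ a b, a < n → b < n → f a = f b → a = b := fun a b ha hb h => hf ha hb h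
  rcases Sym2.eq_iff.1 hij with ⟨h1, -⟩ | ⟨h1, h2⟩
  · exact hinj i j (by omega) (by omega) h1
  · have := hinj i (j + 1) (by omega) (by omega) h1
    have := hinj (i + 1) j (by omega) (by omega) h2
    omega

theorem Set.BijOn.exists_crossing {α : Type*} [Finite α] {f : ℕ → α} {n : ℕ}
    (hf : Set.BijOn f (Set.Iio n) Set.univ) {A B : Set α} {E : Set (Sym2 α)}
    (hA : f 0 ∉ A) (hB : f (n - 1) ∉ B) (hcard : n + E.ncard ≤ A.ncard + B.ncard) :
    ∃ i, i + 1 < n ∧ f (i + 1) ∈ A ∧ f i ∈ B ∧ s(f i, f (i + 1)) ∉ E := by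
  have hn : 0 < n := by
    obtain ⟨j, hj, -⟩ := hf.surjOn (Set.mem_univ (f 0))
    exact Nat.zero_lt_of_lt hj
  set S := {i | i + 1 < n ∧ f (i + 1) ∈ A}
  set T := {i | i + 1 < n ∧ f i ∈ B}
  have hST : S ∪ T ⊆ Set.Iio (n - 1) := by
    rintro i (hi | hi) <;> exact Nat.lt_sub_of_add_lt hi.1
  have hSf : S.Finite := (Set.finite_Iio _).subset (subset_union_left.trans hST)
  have hTf : T.Finite := (Set.finite_Iio _).subset (subset_union_right.trans hST)
  have hS : A.ncard ≤ S.ncard := by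
    refine (Set.ncard_le_ncard (t := (fun i => f (i + 1)) '' S) ?_ (hSf.image _)).trans
      (Set.ncard_image_le hSf)
    intro w hw
    obtain ⟨j, hj, rfl⟩ := hf.surjOn (Set.mem_univ w)
    obtain ⟨i, rfl⟩ : ∃ i, j = i + 1 :=
      Nat.exists_eq_add_one.2 (Nat.pos_of_ne_zero (by rintro rfl; exact hA hw))
    exact ⟨i, ⟨hj, hw⟩, rfl⟩
  have hT : B.ncard ≤ T.ncard := by
    refine (Set.ncard_le_ncard (t := f '' T) ?_ (hTf.image _)).trans (Set.ncard_image_le hTf)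
    intro w hw
    obtain ⟨i, hi, rfl⟩ := hf.surjOn (Set.mem_univ w)
    have : i ≠ n - 1 := by rintro rfl; exact hB hw
    exact ⟨i, ⟨by simp only [Set.mem_Iio] at hi; omega, hw⟩, rfl⟩
  have hcross : E.ncard < (S ∩ T).ncard := by
    have := Set.ncard_union_add_ncard_inter S T hSf hTf
    have := (Set.ncard_le_ncard hST).trans_eq (Set.ncard_Iio_nat (n - 1))
    omega
  by_contra! hE
  exact hcross.not_ge (Set.ncard_le_ncard_of_injOn _ (fun i hi => hE i hi.1.1 hi.1.2 hi.2.2)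
    (hf.injOn.injOn_sym2_mk_succ.mono (inter_subset_left.trans (subset_union_left.trans hST)))
    (Set.toFinite E))

namespace SimpleGraph

open List

variable {α : Type*} {G H F : SimpleGraph α} {l : List α}

lemma isChain_adj_iff_forall_mem_pathEdges :
    l.IsChain G.Adj ↔ ∀ e ∈ l.pathEdges, e ∈ G.edgeSet := by
  induction l with
  | nil => simp
  | cons a l ih =>
    cases l with
    | nil => simp
    | cons b l => simp [isChain_cons_cons, ih]

lemma Walk.edges_ofSupport {l : List α} (hne : l ≠ []) (h : l.IsChain G.Adj) :
    (Walk.ofSupport l hne h).edges = l.pathEdges := by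
  match l with
  | [_] => rfl
  | _ :: v :: l =>
    exact congrArg (s(_, v) :: ·) (edges_ofSupport (l.cons_ne_nil v) h.of_cons)

lemma Walk.exists_support_eq_edges_eq {L : List α} {u v : α} (hu : L.head? = some u)
    (hv : L.getLast? = some v) (h : L.IsChain G.Adj) :
    ∃ p : G.Walk u v, p.support = L ∧ p.edges = L.pathEdges := by
  have hne : L ≠ [] := by rintro rfl; simp at hu
  obtain rfl : L.head hne = u := by simpa [head?_eq_some_head hne] using hu
  obtain rfl : L.getLast hne = v := by simpa [getLast?_eq_some_getLast hne] using hv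
  exact ⟨Walk.ofSupport L hne h, Walk.support_ofSupport hne h, Walk.edges_ofSupport hne h⟩

lemma IsAcyclic.exists_adj_forall_adj_eq [Finite α] (hF : F.IsAcyclic) (he : F.edgeSet.Nonempty) :
    ∃ a b, F.Adj a b ∧ ∀ c, F.Adj a c → c = b := by
  obtain ⟨⟨x, y⟩, hxy⟩ := he
  have hxy : F.Adj x y := hxy
  have : Nonempty α := ⟨x⟩
  obtain ⟨u, v, p, hp, hmax⟩ := Walk.exists_isPath_forall_isPath_length_le_length F
  have hnil : ¬p.Nil := fun h => by
    simpa [Walk.length_eq_zero_iff.2 h] using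
      hmax x y (.cons hxy .nil) (by simp [Walk.cons_isPath_iff, hxy.ne])
  refine ⟨u, p.snd, p.adj_snd hnil, fun c hc => hF.eq_snd_of_adj_start hp hc ?_⟩
  by_contra hcp
  simpa using hmax c v (.cons hc.symm p) (hp.cons hcp)

lemma exists_perm_cons_of_forall_adj_eq (hl : l.Nodup) {b : α} (hb : b ∈ l)
    (hF : ∀ c d, F.Adj b c → F.Adj b d → c = d) (a : α) :
    ∃ l' : List α, l'.Perm (a :: l) ∧ s(a, b) ∈ l'.pathEdges ∧
      ∀ e ∈ F.edgeSet, e ∈ l.pathEdges → e ∈ l'.pathEdges := by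
  obtain ⟨C, D, rfl⟩ := append_of_mem hb
  by_cases hC : ∃ c ∈ C.getLast?, F.Adj c b
  swap
  · refine ⟨C ++ a :: b :: D, perm_middle,
      mem_pathEdges_iff_exists_append.2 ⟨C, a, b, D, rfl, rfl⟩,
      fun e he hel => mem_pathEdges_insert_before hel ?_⟩
    rintro c hc rfl
    exact hC ⟨c, hc, he⟩
  obtain ⟨c, hc, hcb⟩ := hC
  -- insert `a` after `b` instead, which is inserting it before `b` in the reversed list
  refine ⟨C ++ b :: a :: D, ?_, mem_pathEdges_iff_exists_append.2 ⟨C, b, a, D, rfl, Sym2.eq_swap⟩,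
    fun e he hel => ?_⟩
  · simpa using (perm_middle (l₁ := C ++ [b]) (l₂ := D) (a := a))
  have hrev : C ++ b :: a :: D = (D.reverse ++ a :: b :: C.reverse).reverse := by simp
  rw [hrev, mem_pathEdges_reverse]
  refine mem_pathEdges_insert_before (by simpa using mem_pathEdges_reverse.2 hel) ?_
  rintro d hd rfl
  rw [getLast?_reverse] at hd
  have hcd : c ≠ d := (nodup_append.1 hl).2.2 c (mem_of_getLast? hc) d
    (mem_cons_of_mem b (mem_of_mem_head? hd))
  exact hcd (hF c d hcb.symm (F.adj_symm he))

theorem IsAcyclic.exists_nodup_forall_mem_pathEdges [Fintype α]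
    (hF : F.IsAcyclic) (hdeg : ∀ v, (F.neighborSet v).ncard ≤ 2) :
    ∃ l : List α, l.Nodup ∧ (∀ v, v ∈ l) ∧ ∀ e ∈ F.edgeSet, e ∈ l.pathEdges := by
  classical
  induction F using WellFoundedLT.induction with
  | _ F ih =>
  rcases F.edgeSet.eq_empty_or_nonempty with hF0 | hF0
  · exact ⟨Finset.univ.toList, Finset.nodup_toList _, by simp, by simp [hF0]⟩
  obtain ⟨a, b, hab, hleaf⟩ := hF.exists_adj_forall_adj_eq hF0
  set F' := F.deleteEdges {s(a, b)}
  have hF'F : F' < F := lt_of_le_of_ne (deleteEdges_le _) fun h => by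
    simpa [F'] using congrArg (·.Adj a b) h |>.mpr hab
  obtain ⟨l, hnd, hmem, hl⟩ := ih F' hF'F (hF.anti hF'F.le) fun v =>
    (Set.ncard_le_ncard fun _ hw => hF'F.le hw).trans (hdeg v)
  have ha : ∀ c, ¬F'.Adj a c := fun c hc => by
    obtain ⟨hac, hne⟩ := deleteEdges_adj.1 hc
    exact hne (by rw [hleaf c hac]; rfl)
  have hb : ∀ c d, F'.Adj b c → F'.Adj b d → c = d := by
    intro c d hc hd
    by_contra hcd
    refine (hdeg b).not_gt ((Set.two_lt_ncard_iff).2 ⟨a, c, d, hab.symm, hF'F.le hc, hF'F.le hd,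
      ?_, ?_, hcd⟩)
    · rintro rfl; exact ha b hc.symm
    · rintro rfl; exact ha b hd.symm
  obtain ⟨l', hperm, habl', hl'⟩ := exists_perm_cons_of_forall_adj_eq (hnd.erase a)
    (hnd.mem_erase_iff.2 ⟨hab.ne', hmem b⟩) hb a
  refine ⟨l', hperm.nodup_iff.2 (nodup_cons.2 ⟨hnd.not_mem_erase, hnd.erase a⟩),
    fun v => hperm.mem_iff.2 ?_, fun e he => ?_⟩
  · rw [mem_cons, hnd.mem_erase_iff]
    tauto
  by_cases heab : e = s(a, b)
  · exact heab ▸ habl'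
  have he' : e ∈ F'.edgeSet := by simp [F', edgeSet_deleteEdges, he, heab]
  refine hl' e he' (mem_pathEdges_erase (hl e he') fun hae => ?_)
  obtain ⟨c, rfl⟩ := Sym2.mem_iff_exists.1 hae
  exact ha c he'

structure IsHamPathList (H F : SimpleGraph α) (l : List α) : Prop where
  nodup : l.Nodup
  mem : ∀ v, v ∈ l
  pathEdges_subset : ∀ e ∈ l.pathEdges, e ∈ H.edgeSet
  subset_pathEdges : ∀ e ∈ F.edgeSet, e ∈ l.pathEdges

structure IsHamCycleList (H F : SimpleGraph α) (l : List α) : Prop where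
  nodup : l.Nodup
  mem : ∀ v, v ∈ l
  cycleEdges_subset : ∀ e ∈ l.cycleEdges, e ∈ H.edgeSet
  subset_cycleEdges : ∀ e ∈ F.edgeSet, e ∈ l.cycleEdges

lemma isHamCycleList_top (hl : l.Nodup) (hmem : ∀ v, v ∈ l) (h2 : 2 ≤ l.length)
    (hF : ∀ e ∈ F.edgeSet, e ∈ l.pathEdges) : IsHamCycleList ⊤ F l := by
  have hne : l ≠ [] := ne_nil_of_length_pos (by omega)
  refine ⟨hl, hmem, fun e he => ?_, fun e he => (mem_cycleEdges hne).2 (.inl (hF e he))⟩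
  rcases (mem_cycleEdges hne).1 he with he | rfl
  · obtain ⟨i, hi, rfl⟩ := mem_pathEdges_iff_getElem.1 he
    simp [hl.getElem_inj_iff]
  · simp only [edgeSet_top, Set.mem_compl_iff, Sym2.mem_diagSet, Sym2.mk_isDiag_iff,
      getLast_eq_getElem, head_eq_getElem, hl.getElem_inj_iff]
    omega

theorem IsHamCycleList.exists_isHamiltonianCycle [Fintype α] [DecidableEq α]
    (h : IsHamCycleList H F l) (hl : 3 ≤ l.length) :
    ∃ (u : α) (c : H.Walk u u), c.IsHamiltonianCycle ∧ ∀ e ∈ F.edgeSet, e ∈ c.edges := by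
  obtain ⟨a, t, rfl⟩ := exists_cons_of_ne_nil (ne_nil_of_length_pos (by omega : 0 < l.length))
  obtain ⟨p, hps, hpe⟩ := Walk.exists_support_eq_edges_eq (u := a) (v := a) rfl getLast?_concat
    (isChain_adj_iff_forall_mem_pathEdges.2 h.cycleEdges_subset)
  refine ⟨a, p, ?_, fun e he => hpe ▸ h.subset_cycleEdges e he⟩
  have hlen : p.length = (a :: t).length := by
    simpa [hps] using p.length_support.symm
  have hnil : ¬p.Nil := by
    rw [← Walk.length_eq_zero_iff]
    omega
  rw [Walk.isHamiltonianCycle_iff_isCycle_and_length_eq, Walk.isCycle_iff_isPath_tail_and_le_length,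
    Walk.isPath_def, Walk.support_tail_of_not_nil _ hnil, hlen, ← h.nodup.length_eq_card h.mem, hps]
  exact ⟨⟨(perm_append_comm (l₁ := t) (l₂ := [a])).nodup_iff.2 h.nodup, hl⟩, rfl⟩

lemma IsHamPathList.isHamCycleList_append_reverse {P Q : List α} (h : IsHamPathList H F (P ++ Q))
    (hP : P ≠ []) (hQ : Q ≠ []) (hhead : H.Adj (P.head hP) (Q.head hQ))
    (hlast : H.Adj (P.getLast hP) (Q.getLast hQ)) (hF : s(P.getLast hP, Q.head hQ) ∉ F.edgeSet) :
    IsHamCycleList H F (P ++ Q.reverse) := by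
  obtain ⟨p, P, rfl⟩ := exists_cons_of_ne_nil hP
  obtain ⟨q, Q, rfl⟩ := exists_cons_of_ne_nil hQ
  obtain ⟨d, D, hQr⟩ := exists_cons_of_ne_nil (reverse_ne_nil_iff.2 hQ)
  have hd : d = (q :: Q).getLast hQ := by
    rw [← head_reverse (reverse_ne_nil_iff.2 hQ)]
    simp [hQr]
  have hcyc : ∀ e, e ∈ cycleEdges (p :: P ++ (q :: Q).reverse) ↔
      e ∈ pathEdges (p :: P ++ [d]) ∨ e ∈ pathEdges (p :: q :: Q) := by
    intro e
    rw [hQr, mem_cycleEdges_cons_append_cons, ← mem_pathEdges_reverse (l := p :: q :: Q)]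
    simp [← hQr]
  have hpath : ∀ e, e ∈ pathEdges (p :: P ++ q :: Q) ↔
      e ∈ pathEdges (p :: P ++ [q]) ∨ e ∈ pathEdges (q :: Q) := fun e => by
    rw [pathEdges_append_cons, mem_append]
  have hperm : (p :: P ++ (q :: Q).reverse).Perm (p :: P ++ q :: Q) :=
    (reverse_perm _).append_left _
  refine ⟨hperm.nodup_iff.2 h.nodup, fun v => hperm.mem_iff.2 (h.mem v), fun e he => ?_,
    fun e he => ?_⟩
  · rcases (hcyc e).1 he with he | he
    · rcases mem_pathEdges_concat.1 he with he | ⟨c, hc, rfl⟩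
      · exact h.pathEdges_subset e (mem_pathEdges_append_left he)
      · rw [getLast?_eq_some_getLast hP, Option.mem_some_iff] at hc
        rw [← hc, hd]
        exact hlast
    · rcases mem_pathEdges_cons.1 he with ⟨c, hc, rfl⟩ | he
      · rw [head?_cons, Option.mem_some_iff] at hc
        rw [← hc]
        exact hhead
      · exact h.pathEdges_subset e (mem_pathEdges_append_right he)
  · rcases (hpath e).1 (h.subset_pathEdges e he) with he' | he'
    · rcases mem_pathEdges_concat.1 he' with he' | ⟨c, hc, rfl⟩
      · exact (hcyc e).2 (.inl (mem_pathEdges_append_left he'))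
      · rw [getLast?_eq_some_getLast hP, Option.mem_some_iff] at hc
        exact absurd (hc ▸ he) hF
    · exact (hcyc e).2 (.inr (mem_pathEdges_cons.2 (.inr he')))

theorem IsHamPathList.exists_isHamCycleList [Fintype α] (h : IsHamPathList H F l) (hne : l ≠ [])
    (hore : Fintype.card α + F.edgeSet.ncard ≤
      (H.neighborSet (l.head hne)).ncard + (H.neighborSet (l.getLast hne)).ncard) :
    ∃ l', IsHamCycleList H F l' := by
  have hlen := h.nodup.length_eq_card h.mem
  have hf := h.nodup.bijOn_getD h.mem (l.head hne)
  have hget : ∀ i (hi : i < l.length), l.getD i (l.head hne) = l[i] :=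
    fun i hi => getD_eq_getElem _ _ hi
  have hpos : 0 < l.length := length_pos_iff.2 hne
  obtain ⟨i, hi, hA, hB, hE⟩ := hf.exists_crossing (A := H.neighborSet (l.head hne))
    (B := H.neighborSet (l.getLast hne)) (E := F.edgeSet)
    (by rw [hget 0 hpos, ← head_eq_getElem]; exact H.irrefl)
    (by rw [hget _ (by omega), ← getLast_eq_getElem]; exact H.irrefl)
    (hlen ▸ hore)
  rw [hget (i + 1) hi] at hA
  rw [hget i (by omega)] at hB
  rw [hget i (by omega), hget (i + 1) hi] at hE
  have hP : take (i + 1) l ≠ [] := by simp [hne]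
  have hQ : drop (i + 1) l ≠ [] := by simp [hi]
  refine ⟨_, IsHamPathList.isHamCycleList_append_reverse ((take_append_drop (i + 1) l).symm ▸ h)
    hP hQ ?_ ?_ ?_⟩
  · rw [head_take, head_drop]
    exact hA
  · rw [getLast_drop, getLast_take]
    simpa [getElem?_eq_getElem (show i < l.length by omega)] using H.adj_symm hB
  · rw [getLast_take, head_drop]
    simpa [getElem?_eq_getElem (show i < l.length by omega)] using hE

theorem IsHamCycleList.exists_of_sup_edge [Fintype α] {u v : α}
    (h : IsHamCycleList (H ⊔ edge u v) F l) (hFH : F ≤ H)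
    (hore : Fintype.card α + F.edgeSet.ncard ≤ (H.neighborSet u).ncard + (H.neighborSet v).ncard)
    (hn : 3 ≤ Fintype.card α) : ∃ l', IsHamCycleList H F l' := by
  have hsup : ∀ e ∈ l.cycleEdges, e ∈ H.edgeSet ∨ e = s(u, v) := fun e he => by
    have := h.cycleEdges_subset e he
    simp only [edgeSet_sup, edgeSet_edge, Set.mem_union, Set.mem_sdiff,
      Set.mem_singleton_iff] at this
    tauto
  by_cases hH : ∃ e ∈ l.cycleEdges, e ∉ H.edgeSet
  swap
  · exact ⟨l, h.nodup, h.mem, fun e he => by_contra fun heH => hH ⟨e, he, heH⟩,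
      h.subset_cycleEdges⟩
  obtain ⟨e, he, heH⟩ := hH
  have heuv : e = s(u, v) := (hsup e he).resolve_left heH
  -- rotate the cycle so that the new edge `uv` closes it; what remains is a Hamilton path in `H`
  obtain ⟨L, hL, hperm, hcyc, rfl⟩ := exists_rotation_of_mem_cycleEdges he
  have hLnd := hperm.nodup_iff.2 h.nodup
  have hLmem : ∀ w, w ∈ L := fun w => hperm.mem_iff.2 (h.mem w)
  have hL3 : 3 ≤ L.length := hLnd.length_eq_card hLmem ▸ hn
  have hpath : IsHamPathList H F L := by
    refine ⟨hLnd, hLmem, fun e he => ?_, fun e he => ?_⟩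
    · refine ((hsup e ((hcyc e).1 ((mem_cycleEdges hL).2 (.inl he)))).resolve_right ?_)
      rintro rfl
      exact getLast_head_notMem_pathEdges hLnd hL hL3 (heuv ▸ he)
    · rcases (mem_cycleEdges hL).1 ((hcyc e).2 (h.subset_cycleEdges e he)) with he' | rfl
      · exact he'
      · exact absurd (hFH he) heH
  refine hpath.exists_isHamCycleList hL ?_
  rcases Sym2.eq_iff.1 heuv with ⟨h1, h2⟩ | ⟨h1, h2⟩ <;> rw [h1, h2] <;> omega

theorem exists_isHamCycleList_of_ore [Fintype α] (hFG : F ≤ G) (hF : F.IsAcyclic)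
    (hdeg : ∀ v, (F.neighborSet v).ncard ≤ 2)
    (hore : ∀ u v, u ≠ v → ¬G.Adj u v →
      Fintype.card α + F.edgeSet.ncard ≤ (G.neighborSet u).ncard + (G.neighborSet v).ncard)
    (hn : 3 ≤ Fintype.card α) : ∃ l, IsHamCycleList G F l := by
  suffices ∀ H, G ≤ H → ∃ l, IsHamCycleList H F l from this G le_rfl
  intro H
  induction H using WellFoundedGT.induction with
  | _ H ih =>
  intro hGH
  by_cases hH : H = ⊤
  · subst hH
    obtain ⟨l, hl, hmem, hlF⟩ := hF.exists_nodup_forall_mem_pathEdges hdeg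
    exact ⟨l, isHamCycleList_top hl hmem (by rw [hl.length_eq_card hmem]; omega) hlF⟩
  obtain ⟨u, v, huv, hHuv⟩ : ∃ u v, u ≠ v ∧ ¬H.Adj u v := by
    by_contra! h
    exact hH (eq_top_iff.2 fun u v huv => h u v huv)
  obtain ⟨l, hl⟩ := ih _ (H.lt_sup_edge u v huv hHuv) (hGH.trans le_sup_left)
  refine hl.exists_of_sup_edge (hFG.trans hGH) ((hore u v huv fun h => hHuv (hGH h)).trans ?_) hn
  exact add_le_add (Set.ncard_le_ncard fun _ hw => hGH hw) (Set.ncard_le_ncard fun _ hw => hGH hw)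

end SimpleGraph

/-- Pósa's theorem: if `F` is a linear forest with `k > 1` edges in a graph `G` of
order `n` with `δ(G) ≥ (n+k)/2`, then `G` has a Hamilton cycle containing `F`. -/
theorem stmt6 (G F : SimpleGraph V) (k : ℕ) (hk : 1 < k)
    (hFG : F ≤ G)
    (hforest : F.IsAcyclic)
    (hdeg2 : ∀ v : V, (F.neighborSet v).ncard ≤ 2)
    (hedges : F.edgeSet.ncard = k)
    (hdeg : ∀ v : V,
      ((Fintype.card V : ℝ) + k) / 2 ≤ ((G.neighborSet v).ncard : ℝ)) :
    ∃ (u : V) (c : G.Walk u u), c.IsHamiltonianCycle ∧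
      ∀ e ∈ F.edgeSet, e ∈ c.edges := by
  subst hedges
  obtain ⟨⟨x, -⟩, -⟩ := Set.nonempty_of_ncard_ne_zero (s := F.edgeSet) (by omega)
  have hx : (G.neighborSet x).ncard < Fintype.card V := by
    classical
    rw [Set.ncard_eq_toFinset_card', Set.toFinset_card, card_neighborSet_eq_degree]
    exact G.degree_lt_card_verts x
  have hn : F.edgeSet.ncard + 2 ≤ Fintype.card V := by
    have := hdeg x
    have : ((G.neighborSet x).ncard : ℝ) + 1 ≤ Fintype.card V := by exact_mod_cast hx
    exact_mod_cast (by linarith : ((F.edgeSet.ncard : ℝ) + 2) ≤ Fintype.card V)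
  obtain ⟨l, hl⟩ := exists_isHamCycleList_of_ore hFG hforest hdeg2 (fun u v _ _ => by
    have := hdeg u
    have := hdeg v
    exact_mod_cast (by linarith : ((Fintype.card V : ℝ) + F.edgeSet.ncard) ≤
      (G.neighborSet u).ncard + (G.neighborSet v).ncard)) (by omega)
  exact hl.exists_isHamiltonianCycle (by rw [hl.nodup.length_eq_card hl.mem]; omega)
end

section
/- Let 1/n ≪ γ and let G be an n-vertex graph with δ(G) ≥ (n−1)/2 such that e(A,B) ≥ (γ/2)n² for all subsets A, B with |A|, |B| ≥ (1−γ)n/2. Then G is (γn/4, 3)-connected: after deleting any vertex set of size at most γn/4, the remaining graph is connected of diameter at most 3. -/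
open SimpleGraph

variable {V : Type} [Fintype V] [DecidableEq V]

/-- `(m,d)`-connectedness with a real bound `m`: deleting any at most `m` vertices leaves
a connected graph of diameter at most `d`. -/
def mdConnectedR {W : Type} (G : SimpleGraph W) (m : ℝ) (d : ℕ) : Prop :=
  ∀ U : Set W, (U.ncard : ℝ) ≤ m →
    (G.induce Uᶜ).Connected ∧ ∀ x y : ↥(Uᶜ), (G.induce Uᶜ).dist x y ≤ d

/-- A graph of minimum degree `(n-1)/2` in which all pairs of large sets span many edges
is `(γn/4, 3)`-connected. -/
theorem stmt13 : ∀ γ : ℝ, 0 < γ → ∃ n₀ : ℕ, ∀ n : ℕ, n₀ ≤ n →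
    ∀ G : SimpleGraph (Fin n),
    (∀ v : Fin n, ((n : ℝ) - 1) / 2 ≤ ((G.neighborSet v).ncard : ℝ)) →
    (∀ A B : Set (Fin n),
      (1 - γ) / 2 * n ≤ (A.ncard : ℝ) → (1 - γ) / 2 * n ≤ (B.ncard : ℝ) →
      γ / 2 * (n : ℝ) ^ 2 ≤ (eCnt G A B : ℝ)) →
    mdConnectedR G (γ * n / 4) 3 := by
  intro γ hγ
  refine ⟨⌈2 / γ⌉₊ + 1, ?_⟩
  intro n hn G hdeg hedge
  have hn1 : 1 ≤ n := le_trans (Nat.le_add_left 1 _) hn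
  have hn1R : (1 : ℝ) ≤ (n : ℝ) := by exact_mod_cast hn1
  have hnγ : 2 / γ ≤ (n : ℝ) := by
    calc 2 / γ ≤ (⌈2 / γ⌉₊ : ℝ) := Nat.le_ceil _
    _ ≤ n := by exact_mod_cast Nat.le_of_succ_le hn
  have hγn2 : 2 ≤ γ * n := by
    rw [div_le_iff₀ hγ] at hnγ
    nlinarith
  by_cases hγ1 : γ < 1
  · intro U hU
    have key : ∀ x y : ↥(Uᶜ), ∃ w : (G.induce Uᶜ).Walk x y, w.length ≤ 3 := by
      intro x y
      by_cases hxy : x = y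
      · subst hxy; exact ⟨Walk.nil, by simp⟩
      · set A : Set (Fin n) := G.neighborSet ↑x \ U with hAdef
        set B : Set (Fin n) := G.neighborSet ↑y \ U with hBdef
        have hbound : ∀ v : Fin n, (1 - γ) / 2 * n ≤ ((G.neighborSet v \ U).ncard : ℝ) := by
          intro v
          have hsub : G.neighborSet v ⊆ (G.neighborSet v \ U) ∪ U := by
            intro w hw
            by_cases hwU : w ∈ U
            · exact Or.inr hwU
            · exact Or.inl ⟨hw, hwU⟩
          have h1 : (G.neighborSet v).ncard ≤ (G.neighborSet v \ U).ncard + U.ncard := by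
            calc (G.neighborSet v).ncard ≤ ((G.neighborSet v \ U) ∪ U).ncard :=
                  Set.ncard_le_ncard hsub (Set.toFinite _)
            _ ≤ (G.neighborSet v \ U).ncard + U.ncard := Set.ncard_union_le _ _
          have h1R : ((G.neighborSet v).ncard : ℝ) ≤
              ((G.neighborSet v \ U).ncard : ℝ) + (U.ncard : ℝ) := by exact_mod_cast h1
          have := hdeg v
          linarith
        have hEdge := hedge A B (hbound ↑x) (hbound ↑y)
        have hpos : (0 : ℝ) < γ / 2 * (n : ℝ) ^ 2 := by nlinarith
        have hne : ({e : Sym2 (Fin n) | e ∈ G.edgeSet ∧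
            ∃ a ∈ A, ∃ b ∈ B, e = s(a, b)}).Nonempty := by
          rw [Set.nonempty_iff_ne_empty]
          intro hemp
          rw [eCnt, hemp, Set.ncard_empty] at hEdge
          simp at hEdge
          linarith
        obtain ⟨e, heE, a, ha, b, hb, heq⟩ := hne
        subst heq
        have hab : G.Adj a b := heE
        have hxa : G.Adj ↑x a := ha.1
        have hby : G.Adj b ↑y := (hb.1 : G.Adj ↑y b).symm
        have haU : a ∈ Uᶜ := ha.2
        have hbU : b ∈ Uᶜ := hb.2
        have e1 : (G.induce Uᶜ).Adj x ⟨a, haU⟩ := by simpa using hxa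
        have e2 : (G.induce Uᶜ).Adj ⟨a, haU⟩ ⟨b, hbU⟩ := by simpa using hab
        have e3 : (G.induce Uᶜ).Adj ⟨b, hbU⟩ y := by simpa using hby
        exact ⟨Walk.cons e1 (Walk.cons e2 (Walk.cons e3 Walk.nil)), by simp⟩
    have hne : (Uᶜ : Set (Fin n)).Nonempty := by
      by_contra hcon
      rw [Set.not_nonempty_iff_eq_empty, Set.compl_empty_iff] at hcon
      rw [hcon, Set.ncard_univ, Nat.card_eq_fintype_card, Fintype.card_fin] at hU
      nlinarith
    haveI : Nonempty ↥(Uᶜ) := hne.to_subtype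
    refine ⟨⟨fun x y => ?_⟩, fun x y => ?_⟩
    · obtain ⟨w, _⟩ := key x y
      exact ⟨w⟩
    · obtain ⟨w, hw⟩ := key x y
      exact le_trans (SimpleGraph.dist_le w) hw
  · exfalso
    push_neg at hγ1
    have h0 : (1 - γ) / 2 * n ≤ ((∅ : Set (Fin n)).ncard : ℝ) := by
      rw [Set.ncard_empty]
      push_cast
      nlinarith
    have hEdge := hedge ∅ ∅ h0 h0
    have hz : eCnt G (∅ : Set (Fin n)) ∅ = 0 := by
      rw [eCnt]
      convert Set.ncard_empty (Sym2 (Fin n))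
      ext e
      simp
    rw [hz] at hEdge
    simp at hEdge
    nlinarith
end

section
/- Let G be a graph with vertex set partitioned as V(G) = X ∪ Y ∪ Z where (1/2 − α)n ≤ |X|, |Y| ≤ (1/2 + α)n, |Z| ≤ αn for 1/n ≪ α ≪ η, and suppose min{δ(G[X]), δ(G[Y])} ≥ (1/2 − 2η)n and min over z ∈ Z of |N(z) ∩ X| and of |N(z) ∩ Y| is at least (3/4)ηn. Then both G[X] and G[Y] are ((1/2)ηn, 2)-connected, and both G[X ∪ Z] and G[Y ∪ Z] are ((1/2)ηn, 4)-connected. -/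
open SimpleGraph

lemma exists_mem_not_mem {α : Type*} [Finite α] {A B : Set α} (h : (B.ncard : ℝ) < A.ncard) :
    ∃ a ∈ A, a ∉ B := by
  by_contra hc
  push_neg at hc
  have hsub : A ⊆ B := hc
  have := Set.ncard_le_ncard hsub B.toFinite
  exact absurd (Nat.cast_le.mpr this) (not_le.mpr h)

lemma common_mem {α : Type*} [Finite α] {A B S : Set α} (hA : A ⊆ S) (hB : B ⊆ S)
    (h : (S.ncard : ℝ) < (A.ncard : ℝ) + B.ncard) : ∃ w, w ∈ A ∧ w ∈ B := by
  have hun : (A ∪ B).ncard ≤ S.ncard := Set.ncard_le_ncard (Set.union_subset hA hB) S.toFinite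
  have heq : (A ∪ B).ncard + (A ∩ B).ncard = A.ncard + B.ncard :=
    Set.ncard_union_add_ncard_inter A B A.toFinite B.toFinite
  have hpos : 0 < (A ∩ B).ncard := by
    by_contra hc
    push_neg at hc
    have h0 : (A ∩ B).ncard = 0 := Nat.le_zero.mp hc
    have : A.ncard + B.ncard ≤ S.ncard := by omega
    have : ((A.ncard : ℝ) + B.ncard) ≤ S.ncard := by exact_mod_cast this
    linarith
  obtain ⟨w, hw⟩ := (Set.ncard_pos (A ∩ B).toFinite).mp hpos
  exact ⟨w, hw⟩

lemma conn_two {V : Type} (H : SimpleGraph V) (hne : Nonempty V)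
    (hcom : ∀ a b : V, ∃ w, H.Adj a w ∧ H.Adj b w) :
    H.Connected ∧ ∀ x y : V, H.dist x y ≤ 2 := by
  have key : ∀ a b : V, ∃ p : H.Walk a b, p.length ≤ 2 := by
    intro a b
    obtain ⟨w, h1, h2⟩ := hcom a b
    exact ⟨Walk.cons h1 (Walk.cons h2.symm Walk.nil), by simp⟩
  refine ⟨(connected_iff H).mpr ⟨fun a b => ?_, hne⟩, fun x y => ?_⟩
  · obtain ⟨p, _⟩ := key a b; exact ⟨p⟩
  · obtain ⟨p, hp⟩ := key x y; exact le_trans (dist_le p) hp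

lemma conn_four {V : Type} (H : SimpleGraph V) (hne : Nonempty V) (C : Set V)
    (hhop : ∀ a : V, ∃ b ∈ C, a = b ∨ H.Adj a b)
    (hcom : ∀ a b : V, a ∈ C → b ∈ C → ∃ w, H.Adj a w ∧ H.Adj b w) :
    H.Connected ∧ ∀ x y : V, H.dist x y ≤ 4 := by
  have key : ∀ a b : V, ∃ p : H.Walk a b, p.length ≤ 4 := by
    intro a b
    obtain ⟨a1, ha1C, ha⟩ := hhop a
    obtain ⟨b1, hb1C, hb⟩ := hhop b
    obtain ⟨w, h1, h2⟩ := hcom a1 b1 ha1C hb1C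
    obtain ⟨p1, hp1⟩ : ∃ p : H.Walk a a1, p.length ≤ 1 := by
      rcases ha with rfl | h
      · exact ⟨Walk.nil, by simp⟩
      · exact ⟨Walk.cons h Walk.nil, by simp⟩
    obtain ⟨p3, hp3⟩ : ∃ p : H.Walk b1 b, p.length ≤ 1 := by
      rcases hb with rfl | h
      · exact ⟨Walk.nil, by simp⟩
      · exact ⟨(Walk.cons h Walk.nil).reverse, by simp⟩
    refine ⟨p1.append ((Walk.cons h1 (Walk.cons h2.symm Walk.nil)).append p3), ?_⟩
    simp only [Walk.length_append, Walk.length_cons, Walk.length_nil]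
    omega
  refine ⟨(connected_iff H).mpr ⟨fun a b => ?_, hne⟩, fun x y => ?_⟩
  · obtain ⟨p, _⟩ := key a b; exact ⟨p⟩
  · obtain ⟨p, hp⟩ := key x y; exact le_trans (dist_le p) hp

lemma main_aux {n : ℕ} (η α : ℝ) (hη0 : 0 < η) (hη : η < 1 / 12) (hα0 : 0 < α) (hα : α < η)
    (hn : 1 ≤ n) (G : SimpleGraph (Fin n)) (X Z : Set (Fin n))
    (hX1 : ((1 : ℝ) / 2 - α) * n ≤ (X.ncard : ℝ)) (hX2 : (X.ncard : ℝ) ≤ ((1 : ℝ) / 2 + α) * n)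
    (hdeg : ∀ x ∈ X, ((1 : ℝ) / 2 - 2 * η) * n ≤ ((G.neighborSet x ∩ X).ncard : ℝ))
    (hzdeg : ∀ z ∈ Z, 3 / 4 * η * n ≤ ((G.neighborSet z ∩ X).ncard : ℝ)) :
    mdConnectedR (G.induce X) (η * n / 2) 2 ∧ mdConnectedR (G.induce (X ∪ Z)) (η * n / 2) 4 := by
  have hn' : (1 : ℝ) ≤ n := by exact_mod_cast hn
  constructor
  · -- G[X] is (ηn/2, 2)-connected
    intro U hU
    set imU : Set (Fin n) := Subtype.val '' U with himU_def
    have himU : (imU.ncard : ℝ) ≤ η * n / 2 := by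
      rw [himU_def, Set.ncard_image_of_injective U Subtype.val_injective]; exact hU
    -- common neighbours at the Fin n level, among X \ imU
    have hcomFin : ∀ x y : Fin n, x ∈ X → y ∈ X →
        ∃ w, w ∈ X ∧ w ∉ imU ∧ G.Adj x w ∧ G.Adj y w := by
      intro x y hx hy
      have hA : (G.neighborSet x ∩ X) \ imU ⊆ X \ imU :=
        Set.diff_subset_diff_left Set.inter_subset_right
      have hB : (G.neighborSet y ∩ X) \ imU ⊆ X \ imU :=
        Set.diff_subset_diff_left Set.inter_subset_right
      have hcardA : ((1 : ℝ) / 2 - 2 * η) * n - η * n / 2 ≤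
          (((G.neighborSet x ∩ X) \ imU).ncard : ℝ) := by
        have h1 := Set.ncard_le_ncard_diff_add_ncard (G.neighborSet x ∩ X) imU imU.toFinite
        have h1' : ((G.neighborSet x ∩ X).ncard : ℝ) ≤
            (((G.neighborSet x ∩ X) \ imU).ncard : ℝ) + imU.ncard := by exact_mod_cast h1
        have := hdeg x hx
        linarith
      have hcardB : ((1 : ℝ) / 2 - 2 * η) * n - η * n / 2 ≤
          (((G.neighborSet y ∩ X) \ imU).ncard : ℝ) := by
        have h1 := Set.ncard_le_ncard_diff_add_ncard (G.neighborSet y ∩ X) imU imU.toFinite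
        have h1' : ((G.neighborSet y ∩ X).ncard : ℝ) ≤
            (((G.neighborSet y ∩ X) \ imU).ncard : ℝ) + imU.ncard := by exact_mod_cast h1
        have := hdeg y hy
        linarith
      have hScard : ((X \ imU).ncard : ℝ) ≤ (X.ncard : ℝ) := by
        exact_mod_cast Set.ncard_le_ncard Set.diff_subset X.toFinite
      obtain ⟨w, hwA, hwB⟩ := common_mem hA hB (by nlinarith)
      exact ⟨w, hwA.1.2, hwA.2, hwA.1.1, hwB.1.1⟩
    have hmem : ∀ (w : Fin n) (hw : w ∈ X), w ∉ imU → (⟨w, hw⟩ : ↥X) ∈ Uᶜ := by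
      intro w hw hwn hmemU
      exact hwn ⟨⟨w, hw⟩, hmemU, rfl⟩
    have hne : Nonempty ↥(Uᶜ : Set ↥X) := by
      obtain ⟨x, hx, hxn⟩ := exists_mem_not_mem (A := X) (B := imU) (by nlinarith)
      exact ⟨⟨⟨x, hx⟩, hmem x hx hxn⟩⟩
    refine conn_two _ hne ?_
    intro a b
    have han : (a.1.1 : Fin n) ∉ imU := fun h => by
      obtain ⟨u, hu, hval⟩ := h
      exact a.2 (by rwa [Subtype.val_injective hval] at hu)
    obtain ⟨w, hwX, hwn, h1, h2⟩ := hcomFin a.1.1 b.1.1 a.1.2 b.1.2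
    exact ⟨⟨⟨w, hwX⟩, hmem w hwX hwn⟩, h1, h2⟩
  · -- G[X ∪ Z] is (ηn/2, 4)-connected
    intro U hU
    set imU : Set (Fin n) := Subtype.val '' U with himU_def
    have himU : (imU.ncard : ℝ) ≤ η * n / 2 := by
      rw [himU_def, Set.ncard_image_of_injective U Subtype.val_injective]; exact hU
    have hcomFin : ∀ x y : Fin n, x ∈ X → y ∈ X →
        ∃ w, w ∈ X ∧ w ∉ imU ∧ G.Adj x w ∧ G.Adj y w := by
      intro x y hx hy
      have hA : (G.neighborSet x ∩ X) \ imU ⊆ X \ imU :=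
        Set.diff_subset_diff_left Set.inter_subset_right
      have hB : (G.neighborSet y ∩ X) \ imU ⊆ X \ imU :=
        Set.diff_subset_diff_left Set.inter_subset_right
      have hcardA : ((1 : ℝ) / 2 - 2 * η) * n - η * n / 2 ≤
          (((G.neighborSet x ∩ X) \ imU).ncard : ℝ) := by
        have h1 := Set.ncard_le_ncard_diff_add_ncard (G.neighborSet x ∩ X) imU imU.toFinite
        have h1' : ((G.neighborSet x ∩ X).ncard : ℝ) ≤
            (((G.neighborSet x ∩ X) \ imU).ncard : ℝ) + imU.ncard := by exact_mod_cast h1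
        have := hdeg x hx
        linarith
      have hcardB : ((1 : ℝ) / 2 - 2 * η) * n - η * n / 2 ≤
          (((G.neighborSet y ∩ X) \ imU).ncard : ℝ) := by
        have h1 := Set.ncard_le_ncard_diff_add_ncard (G.neighborSet y ∩ X) imU imU.toFinite
        have h1' : ((G.neighborSet y ∩ X).ncard : ℝ) ≤
            (((G.neighborSet y ∩ X) \ imU).ncard : ℝ) + imU.ncard := by exact_mod_cast h1
        have := hdeg y hy
        linarith
      have hScard : ((X \ imU).ncard : ℝ) ≤ (X.ncard : ℝ) := by
        exact_mod_cast Set.ncard_le_ncard Set.diff_subset X.toFinite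
      obtain ⟨w, hwA, hwB⟩ := common_mem hA hB (by nlinarith)
      exact ⟨w, hwA.1.2, hwA.2, hwA.1.1, hwB.1.1⟩
    have hmem : ∀ (w : Fin n) (hw : w ∈ X ∪ Z), w ∉ imU → (⟨w, hw⟩ : ↥(X ∪ Z)) ∈ Uᶜ := by
      intro w hw hwn hmemU
      exact hwn ⟨⟨w, hw⟩, hmemU, rfl⟩
    have hne : Nonempty ↥(Uᶜ : Set ↥(X ∪ Z)) := by
      obtain ⟨x, hx, hxn⟩ := exists_mem_not_mem (A := X) (B := imU) (by nlinarith)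
      exact ⟨⟨⟨x, Or.inl hx⟩, hmem x (Or.inl hx) hxn⟩⟩
    refine conn_four _ hne {v : ↥(Uᶜ : Set ↥(X ∪ Z)) | (v.1.1 : Fin n) ∈ X} ?_ ?_
    · intro a
      have han : (a.1.1 : Fin n) ∉ imU := fun h => by
        obtain ⟨u, hu, hval⟩ := h
        exact a.2 (by rwa [Subtype.val_injective hval] at hu)
      rcases a.1.2 with hx | hz
      · exact ⟨a, hx, Or.inl rfl⟩
      · obtain ⟨w, hw, hwn⟩ := exists_mem_not_mem
          (A := G.neighborSet a.1.1 ∩ X) (B := imU)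
          (by have := hzdeg a.1.1 hz; nlinarith)
        refine ⟨⟨⟨w, Or.inl hw.2⟩, hmem w (Or.inl hw.2) hwn⟩, hw.2, Or.inr hw.1⟩
    · intro a b hac hbc
      obtain ⟨w, hwX, hwn, h1, h2⟩ := hcomFin a.1.1 b.1.1 hac hbc
      exact ⟨⟨⟨w, Or.inl hwX⟩, hmem w (Or.inl hwX) hwn⟩, h1, h2⟩

/-- Under a near-balanced partition `X ∪ Y ∪ Z` with the indicated degree conditions,
`G[X]` and `G[Y]` are `(ηn/2, 2)`-connected and `G[X ∪ Z]`, `G[Y ∪ Z]` are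
`(ηn/2, 4)`-connected. -/
theorem stmt15 : ∃ c : ℝ, 0 < c ∧ ∀ η : ℝ, 0 < η → η < c →
    ∃ α₀ : ℝ, 0 < α₀ ∧ ∀ α : ℝ, 0 < α → α < α₀ →
    ∃ n₀ : ℕ, ∀ n : ℕ, n₀ ≤ n →
    ∀ (G : SimpleGraph (Fin n)) (X Y Z : Set (Fin n)),
    X ∪ Y ∪ Z = Set.univ → Disjoint X Y → Disjoint X Z → Disjoint Y Z →
    ((1 : ℝ) / 2 - α) * n ≤ (X.ncard : ℝ) → (X.ncard : ℝ) ≤ ((1 : ℝ) / 2 + α) * n →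
    ((1 : ℝ) / 2 - α) * n ≤ (Y.ncard : ℝ) → (Y.ncard : ℝ) ≤ ((1 : ℝ) / 2 + α) * n →
    (Z.ncard : ℝ) ≤ α * n →
    (∀ x ∈ X, ((1 : ℝ) / 2 - 2 * η) * n ≤ ((G.neighborSet x ∩ X).ncard : ℝ)) →
    (∀ y ∈ Y, ((1 : ℝ) / 2 - 2 * η) * n ≤ ((G.neighborSet y ∩ Y).ncard : ℝ)) →
    (∀ z ∈ Z, 3 / 4 * η * n ≤ ((G.neighborSet z ∩ X).ncard : ℝ)) →
    (∀ z ∈ Z, 3 / 4 * η * n ≤ ((G.neighborSet z ∩ Y).ncard : ℝ)) →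
    mdConnectedR (G.induce X) (η * n / 2) 2 ∧
    mdConnectedR (G.induce Y) (η * n / 2) 2 ∧
    mdConnectedR (G.induce (X ∪ Z)) (η * n / 2) 4 ∧
    mdConnectedR (G.induce (Y ∪ Z)) (η * n / 2) 4 := by
  refine ⟨1 / 12, by norm_num, fun η hη0 hη => ⟨η, hη0, fun α hα0 hα => ⟨1, ?_⟩⟩⟩
  intro n hn G X Y Z _ _ _ _ hX1 hX2 hY1 hY2 _ hdX hdY hzX hzY
  obtain ⟨hX, hXZ⟩ := main_aux η α hη0 hη hα0 hα hn G X Z hX1 hX2 hdX hzX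
  obtain ⟨hY, hYZ⟩ := main_aux η α hη0 hη hα0 hα hn G Y Z hY1 hY2 hdY hzY
  exact ⟨hX, hY, hXZ, hYZ⟩
end

section
/- Let X be a vertex set in a graph G and define f(X) to be the maximum number of edges of a linear forest (disjoint union of paths) contained in G[X]. If f(X) ≤ 2ηn and Δ(G[X]) ≤ ηn, and there is a vertex of X not covered by a maximum linear forest of G[X] (which holds when |X| > 2ηn ≥ f(X)), then f(X) ≥ 2δ(G[X]); in particular, for any induced subgraph H = G[X] with |X| > 2ηn and Δ(H) ≤ ηn one has f(X) ≥ 2δ(H). -/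
/-!
Let every vertex of `X` have at least `d` neighbours in `X`, with `2d < |X|`. A longest path `P`
of `G[X]` has all neighbours of its ends on `P`, hence at least `d` edges. If it has fewer than
`2d` edges, pigeonhole gives `i` with `v₀ ~ vᵢ₊₁` and `vᵢ ~ vₖ`, closing `P` into a cycle through
all of `V(P)`; a vertex of `P` with a neighbour off `P` would then give a longer path, so `V(P)` is
closed under adjacency. Since `|V(P)| ≤ 2d < |X|`, a longest path of `G[X ∖ V(P)]` supplies `d`
further edges, disjoint from `P`.
-/

open SimpleGraph

variable {V : Type} [Fintype V] [DecidableEq V]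

/-- `F` is a linear forest (disjoint union of paths) contained in `G` with all its
edges inside `X`. -/
def IsLinearForestOn (G : SimpleGraph V) (X : Set V) (F : SimpleGraph V) : Prop :=
  F ≤ G ∧ (∀ e ∈ F.edgeSet, ∀ v ∈ e, v ∈ X) ∧ F.IsAcyclic ∧
    ∀ v : V, (F.neighborSet v).ncard ≤ 2

/-- `f(X)`: the maximum number of edges of a linear forest contained in `G[X]`. -/
noncomputable def maxLF (G : SimpleGraph V) (X : Set V) : ℕ :=
  sSup {k | ∃ F : SimpleGraph V, IsLinearForestOn G X F ∧ F.edgeSet.ncard = k}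

namespace SimpleGraph.Walk

variable {V : Type*} {G : SimpleGraph V} {u v w z : V} {d : ℕ}

lemma IsPath.ncard_neighborSet_toSubgraph_le_two {p : G.Walk u v} (hp : p.IsPath) (w : V) :
    (p.toSubgraph.neighborSet w).ncard ≤ 2 := by
  by_cases hw : w ∈ p.support
  · obtain ⟨j, rfl, hj⟩ := mem_support_iff_exists_getVert.1 hw
    have hsub : p.toSubgraph.neighborSet (p.getVert j) ⊆
        {p.getVert (j - 1), p.getVert (j + 1)} := fun z hz => by
      obtain ⟨i, hi, hil⟩ := p.toSubgraph_adj_iff.1 hz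
      have hinj := hp.getVert_injOn
      rcases Sym2.eq_iff.1 hi with ⟨h1, h2⟩ | ⟨h1, h2⟩
      · obtain rfl : i = j := hinj (by simp; omega) (by simp; omega) h1
        simp [← h2]
      · obtain rfl : i + 1 = j := hinj (by simp; omega) (by simp; omega) h2
        simp [← h1]
    exact (Set.ncard_le_ncard hsub (Set.toFinite _)).trans
      ((Set.ncard_insert_le _ _).trans (by simp))
  · have : p.toSubgraph.neighborSet w = ∅ :=
      Set.eq_empty_of_forall_notMem fun z hz => hw (p.mem_support_of_adj_toSubgraph hz)
    simp [this]

lemma IsTrail.ncard_edgeSet {p : G.Walk u v} (hp : p.IsTrail) : p.edgeSet.ncard = p.length := by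
  classical
  rw [edgeSet, ← List.coe_toFinset, Set.ncard_coe_finset,
    List.toFinset_card_of_nodup hp.edges_nodup, length_edges]

lemma IsPath.ncard_support {p : G.Walk u v} (hp : p.IsPath) :
    {x | x ∈ p.support}.ncard = p.length + 1 := by
  classical
  rw [← List.coe_toFinset, Set.ncard_coe_finset, List.toFinset_card_of_nodup hp.support_nodup,
    length_support]

lemma mem_of_mem_support {Y : Set V} {p : G.Walk u v} (hGY : ∀ a b, G.Adj a b → a ∈ Y)
    (hp : ¬ p.Nil) (hw : w ∈ p.support) : w ∈ Y := by
  obtain ⟨e, he, hwe⟩ := (mem_support_iff_exists_mem_edges_of_not_nil hp).1 hw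
  induction e with
  | h a b =>
    have hab := p.adj_of_mem_edges he
    rcases Sym2.mem_iff.1 hwe with rfl | rfl
    exacts [hGY _ _ hab, hGY _ _ hab.symm]

lemma IsCycle.exists_isPath_to [DecidableEq V] {c : G.Walk v v} (hc : c.IsCycle)
    (hw : w ∈ c.support) :
    ∃ (a : V) (t : G.Walk a w), t.IsPath ∧ t.length + 1 = c.length ∧
      ∀ x ∈ t.support, x ∈ c.support := by
  have hc' : (c.rotate w hw).IsCycle := hc.rotate hw
  refine ⟨_, (c.rotate w hw).tail, hc'.isPath_tail, ?_, fun x hx => ?_⟩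
  · rw [length_tail_add_one hc'.not_nil, length_rotate]
  · rw [support_tail_of_not_nil _ hc'.not_nil] at hx
    exact (mem_support_rotate_iff c w hw).1 (List.mem_of_mem_tail hx)

/-- The cycle `v₀ ⋯ vᵢ vₖ vₖ₋₁ ⋯ vᵢ₊₁ v₀`, where `vⱼ = p.getVert j`. -/
lemma IsPath.exists_isCycle_of_adj_of_adj {p : G.Walk u v} (hp : p.IsPath) (hlen : 2 ≤ p.length)
    {i : ℕ} (hi : i < p.length) (hu : G.Adj u (p.getVert (i + 1))) (hv : G.Adj (p.getVert i) v) :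
    ∃ c : G.Walk u u, c.IsCycle ∧ c.length = p.length + 1 ∧
      ∀ x, x ∈ c.support ↔ x ∈ p.support := by
  set r := p.drop i
  have hr : ¬ r.Nil := by rw [nil_drop_iff]; omega
  have hu' : G.Adj u r.snd := by rwa [snd, drop_getVert]
  have hdecomp : (p.take i).append (cons (r.adj_snd hr) r.tail) = p := by
    rw [r.cons_tail_eq hr]; exact p.append_take_drop_eq i
  set s := (p.take i).append (cons hv r.tail.reverse)
  have hsupp : s.support.Perm p.support := by
    conv_rhs => rw [← hdecomp]
    simp only [s, support_append, support_cons, List.tail_cons, support_reverse]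
    exact (List.reverse_perm _).append_left _
  have hs : s.IsPath := isPath_def _ |>.2 (hsupp.nodup_iff.2 hp.support_nodup)
  have hslen : s.length = p.length := by
    conv_rhs => rw [← hdecomp]
    simp [s]
  have hcyc : (s.append (cons hu'.symm Walk.nil)).IsCycle := by
    refine hs.isCycle_append (by simp [hu'.ne']) ?_ (by omega)
    have := s.cons_tail_support ▸ hs.support_nodup
    simpa using (List.nodup_cons.1 this).1
  refine ⟨_, hcyc, by simp [hslen], fun x => ?_⟩
  rw [← hsupp.mem_iff]
  simp only [support_append, support_cons, support_nil, List.tail_cons, List.mem_append,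
    List.mem_singleton]
  exact ⟨fun h => h.elim id fun hx => hx ▸ s.start_mem_support, Or.inl⟩

def IsLongestPath (p : G.Walk u v) : Prop :=
  p.IsPath ∧ ∀ ⦃a b : V⦄ (q : G.Walk a b), q.IsPath → q.length ≤ p.length

lemma _root_.SimpleGraph.exists_isLongestPath [Fintype V] [Nonempty V] (G : SimpleGraph V) :
    ∃ (u v : V) (p : G.Walk u v), p.IsLongestPath := by
  set S : Set ℕ := {n | ∃ (a b : V) (q : G.Walk a b), q.IsPath ∧ q.length = n}
  have hS : BddAbove S :=
    ⟨Fintype.card V, by rintro _ ⟨a, b, q, hq, rfl⟩; exact hq.length_lt.le⟩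
  have hne : S.Nonempty := ⟨0, Classical.arbitrary V, _, nil, IsPath.nil, rfl⟩
  obtain ⟨u, v, p, hp, hlen⟩ := Nat.sSup_mem hne hS
  exact ⟨u, v, p, hp, fun a b q hq => hlen ▸ le_csSup hS ⟨a, b, q, hq, rfl⟩⟩

lemma IsLongestPath.reverse {p : G.Walk u v} (hp : p.IsLongestPath) : p.reverse.IsLongestPath :=
  ⟨hp.1.reverse, fun _ _ q hq => (length_reverse p).symm ▸ hp.2 q hq⟩

lemma IsLongestPath.mem_support_of_adj_start {p : G.Walk u v} (hp : p.IsLongestPath)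
    (h : G.Adj u z) : z ∈ p.support := by
  by_contra hz
  have := hp.2 (cons h.symm p) (hp.1.cons hz)
  simp at this

lemma IsLongestPath.mem_support_of_adj_end {p : G.Walk u v} (hp : p.IsLongestPath)
    (h : G.Adj v z) : z ∈ p.support := by
  simpa using hp.reverse.mem_support_of_adj_start h

lemma IsLongestPath.ncard_neighborSet_start_le {p : G.Walk u v} (hp : p.IsLongestPath) :
    (G.neighborSet u).ncard ≤ p.length := by
  have hsub : G.neighborSet u ⊆ {x | x ∈ p.support} \ {u} := fun z hz =>
    ⟨hp.mem_support_of_adj_start hz, hz.ne'⟩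
  calc (G.neighborSet u).ncard ≤ ({x | x ∈ p.support} \ {u}).ncard :=
        Set.ncard_le_ncard hsub (List.finite_toSet _).sdiff
    _ = p.length := by
        rw [Set.ncard_sdiff_singleton_of_mem (s := {x | x ∈ p.support}) p.start_mem_support,
          hp.1.ncard_support, Nat.add_sub_cancel]

lemma exists_adj_start_succ_and_adj_end_of_length_lt {p : G.Walk u v}
    (hu : ∀ z, G.Adj u z → z ∈ p.support) (hv : ∀ z, G.Adj v z → z ∈ p.support)
    (hdu : d ≤ (G.neighborSet u).ncard) (hdv : d ≤ (G.neighborSet v).ncard)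
    (hlen : p.length < 2 * d) :
    ∃ i < p.length, G.Adj u (p.getVert (i + 1)) ∧ G.Adj (p.getVert i) v := by
  classical
  have ncard_le {N : Set V} {S : Finset ℕ} {f : ℕ → V} (h : N ⊆ S.image f) :
      N.ncard ≤ S.card :=
    (Set.ncard_le_ncard h (Finset.finite_toSet _)).trans
      ((Set.ncard_coe_finset _).trans_le Finset.card_image_le)
  set A := (Finset.range p.length).filter fun i => G.Adj u (p.getVert (i + 1))
  set B := (Finset.range p.length).filter fun i => G.Adj (p.getVert i) v
  have hA : d ≤ A.card := hdu.trans <| ncard_le (f := fun i => p.getVert (i + 1)) fun z hz => by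
    obtain ⟨j, rfl, hj⟩ := mem_support_iff_exists_getVert.1 (hu z hz)
    have hj0 : j ≠ 0 := by rintro rfl; exact hz.ne (p.getVert_zero).symm
    refine Finset.mem_image.2 ⟨j - 1, ?_, by simp [Nat.sub_add_cancel (Nat.pos_of_ne_zero hj0)]⟩
    simp only [A, Finset.mem_filter, Finset.mem_range, Nat.sub_add_cancel (Nat.pos_of_ne_zero hj0)]
    exact ⟨by omega, hz⟩
  have hB : d ≤ B.card := hdv.trans <| ncard_le (f := p.getVert) fun z hz => by
    obtain ⟨j, rfl, hj⟩ := mem_support_iff_exists_getVert.1 (hv z hz)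
    have hjk : j ≠ p.length := by rintro rfl; exact hz.ne (p.getVert_length).symm
    exact Finset.mem_image.2
      ⟨j, Finset.mem_filter.2 ⟨Finset.mem_range.2 (by omega), hz.symm⟩, rfl⟩
  have hAB : (A ∪ B).card ≤ p.length :=
    (Finset.card_le_card (Finset.union_subset (Finset.filter_subset _ _)
      (Finset.filter_subset _ _))).trans (Finset.card_range _).le
  obtain ⟨i, hi⟩ : (A ∩ B).Nonempty := by
    rw [← Finset.card_pos]
    have := Finset.card_union_add_card_inter A B
    omega
  simp only [A, B, Finset.mem_inter, Finset.mem_filter, Finset.mem_range] at hi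
  exact ⟨i, hi.1.1, hi.1.2, hi.2.2⟩

lemma IsLongestPath.mem_support_of_adj [DecidableEq V] {p : G.Walk u v} (hp : p.IsLongestPath)
    (hdu : d ≤ (G.neighborSet u).ncard) (hdv : d ≤ (G.neighborSet v).ncard)
    (hlen : p.length < 2 * d) (hw : w ∈ p.support) (hwz : G.Adj w z) : z ∈ p.support := by
  by_cases hwu : w = u
  · exact hp.mem_support_of_adj_start (hwu ▸ hwz)
  by_cases hwv : w = v
  · exact hp.mem_support_of_adj_end (hwv ▸ hwz)
  have hlen2 : 2 ≤ p.length := by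
    obtain ⟨j, rfl, hj⟩ := mem_support_iff_exists_getVert.1 hw
    have : j ≠ 0 := by rintro rfl; exact hwu p.getVert_zero
    have : j ≠ p.length := by rintro rfl; exact hwv p.getVert_length
    omega
  obtain ⟨i, hi, hui, hiv⟩ := exists_adj_start_succ_and_adj_end_of_length_lt
    (fun _ => hp.mem_support_of_adj_start) (fun _ => hp.mem_support_of_adj_end) hdu hdv hlen
  obtain ⟨c, hc, hclen, hcsupp⟩ := hp.1.exists_isCycle_of_adj_of_adj hlen2 hi hui hiv
  obtain ⟨a, t, ht, htlen, htsupp⟩ := hc.exists_isPath_to ((hcsupp w).2 hw)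
  -- `t` runs through all of `V(p)` and ends at `w`, so continuing to `z ∉ V(p)` beats `p`.
  by_contra hz
  have hzt : z ∉ t.reverse.support := by
    rw [support_reverse, List.mem_reverse]
    exact fun h => hz ((hcsupp z).1 (htsupp z h))
  have := hp.2 (cons hwz.symm t.reverse) (ht.reverse.cons hzt)
  simp only [length_cons, length_reverse] at this
  omega

end SimpleGraph.Walk

namespace SimpleGraph

variable {V : Type*} {G F : SimpleGraph V} {Y : Set V} {u v : V} {d : ℕ}

lemma IsAcyclic.sup_toSubgraph_spanningCoe (hF : F.IsAcyclic) {p : G.Walk u v}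
    (hp : p.IsPath) (hisol : ∀ w ∈ p.support, F.neighborSet w = ∅) :
    (F ⊔ p.toSubgraph.spanningCoe).IsAcyclic := by
  induction p with
  | nil =>
    convert hF using 1
    ext a b
    simp
  | @cons u w v h q ih =>
    rw [Walk.cons_isPath_iff] at hp
    have hqF : (F ⊔ q.toSubgraph.spanningCoe).IsAcyclic :=
      ih hp.1 fun x hx => hisol x (List.mem_cons_of_mem _ hx)
    have hu : (F ⊔ q.toSubgraph.spanningCoe).neighborSet u = ∅ := by
      refine Set.eq_empty_of_forall_notMem fun z hz => ?_
      rcases hz with hz | hz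
      · exact (hisol u List.mem_cons_self).subset hz
      · exact hp.2 (q.mem_support_of_adj_toSubgraph hz)
    have heq : F ⊔ (Walk.cons h q).toSubgraph.spanningCoe =
        (F ⊔ q.toSubgraph.spanningCoe) ⊔ edge u w := by
      rw [Walk.toSubgraph, Subgraph.sup_spanningCoe, Subgraph.spanningCoe_subgraphOfAdj, edge,
        sup_comm (fromEdgeSet _), sup_assoc]
    rw [heq]
    refine hqF.sup_edge_of_not_reachable fun hr => ?_
    obtain ⟨z, hz⟩ := hr.nonempty_neighborSet_left h.ne
    rw [hu] at hz
    exact hz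

lemma Subgraph.neighborSet_spanningCoe_induce_top {X : Set V} {x : V} (hx : x ∈ X) :
    ((⊤ : G.Subgraph).induce X).spanningCoe.neighborSet x = G.neighborSet x ∩ X := by
  ext z
  simp [hx, and_comm]

lemma exists_isPath_long_or_closed [Fintype V] [DecidableEq V] (hd : 0 < d) (hY : Y.Nonempty)
    (hGY : ∀ a b, G.Adj a b → a ∈ Y) (hdeg : ∀ y ∈ Y, d ≤ (G.neighborSet y).ncard) :
    ∃ (u v : V) (p : G.Walk u v), p.IsPath ∧ (∀ w ∈ p.support, w ∈ Y) ∧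
      d ≤ p.length ∧ (p.length < 2 * d → ∀ w ∈ p.support, ∀ z, G.Adj w z → z ∈ p.support) := by
  obtain ⟨y, hy⟩ := hY
  have : Nonempty V := ⟨y⟩
  obtain ⟨u, v, p, hp⟩ := G.exists_isLongestPath
  obtain ⟨y', hyy'⟩ : (G.neighborSet y).Nonempty :=
    Set.nonempty_of_ncard_ne_zero (by have := hdeg y hy; omega)
  have hnil : ¬ p.Nil := by
    have hadj : G.Adj y y' := hyy'
    have := hp.2 hadj.toWalk (by simp [hadj.ne])
    rw [← Walk.length_eq_zero_iff]
    simp at this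
    omega
  have hsupp : ∀ w ∈ p.support, w ∈ Y := fun _ => p.mem_of_mem_support hGY hnil
  have hdu := hdeg u (hsupp u p.start_mem_support)
  have hdv := hdeg v (hsupp v p.end_mem_support)
  exact ⟨u, v, p, hp.1, hsupp, hdu.trans hp.ncard_neighborSet_start_le,
    fun hlen w hw z hwz => hp.mem_support_of_adj hdu hdv hlen hw hwz⟩

end SimpleGraph

section LinearForest

variable {V : Type} {G K F : SimpleGraph V} {X : Set V} {u v : V}

lemma isLinearForestOn_bot : IsLinearForestOn G X ⊥ :=
  ⟨bot_le, by simp, isAcyclic_bot, by simp⟩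

lemma IsLinearForestOn.sup_toSubgraph_spanningCoe (hF : IsLinearForestOn G X F) (hKG : K ≤ G)
    (hKX : ∀ a b, K.Adj a b → a ∈ X) {p : K.Walk u v} (hp : p.IsPath)
    (hisol : ∀ w ∈ p.support, F.neighborSet w = ∅) :
    IsLinearForestOn G X (F ⊔ p.toSubgraph.spanningCoe) := by
  obtain ⟨hFG, hFX, hFacyc, hFdeg⟩ := hF
  refine ⟨sup_le hFG (p.toSubgraph.spanningCoe_le.trans hKG), ?_,
    hFacyc.sup_toSubgraph_spanningCoe hp hisol, fun w => ?_⟩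
  · intro e he
    rw [edgeSet_sup] at he
    rcases he with he | he
    · exact hFX e he
    · induction e with
      | h a b =>
        have hab : K.Adj a b := p.toSubgraph.adj_sub he
        rintro w hw
        rcases Sym2.mem_iff.1 hw with rfl | rfl
        exacts [hKX _ _ hab, hKX _ _ hab.symm]
  · have hsup : (F ⊔ p.toSubgraph.spanningCoe).neighborSet w =
        F.neighborSet w ∪ p.toSubgraph.neighborSet w := rfl
    by_cases hw : w ∈ p.support
    · rw [hsup, hisol w hw, Set.empty_union]
      exact hp.ncard_neighborSet_toSubgraph_le_two w
    · have : p.toSubgraph.neighborSet w = ∅ :=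
        Set.eq_empty_of_forall_notMem fun z hz => hw (p.mem_support_of_adj_toSubgraph hz)
      rw [hsup, this, Set.union_empty]
      exact hFdeg w

lemma ncard_edgeSet_sup_toSubgraph_spanningCoe [Finite V] {p : K.Walk u v} (hp : p.IsPath)
    (hisol : ∀ w ∈ p.support, F.neighborSet w = ∅) :
    (F ⊔ p.toSubgraph.spanningCoe).edgeSet.ncard = F.edgeSet.ncard + p.length := by
  have hdisj : Disjoint F.edgeSet p.edgeSet := by
    refine Set.disjoint_left.2 fun e heF hep => ?_
    induction e with
    | h a b =>
      have ha : a ∈ p.support := p.fst_mem_support_of_mem_edges hep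
      exact (hisol a ha).subset heF
  rw [edgeSet_sup, Subgraph.edgeSet_spanningCoe, Walk.edgeSet_toSubgraph,
    Set.ncard_union_eq hdisj, hp.isTrail.ncard_edgeSet]

lemma IsLinearForestOn.ncard_edgeSet_le_maxLF [Finite V] (hF : IsLinearForestOn G X F) :
    F.edgeSet.ncard ≤ maxLF G X :=
  le_csSup ⟨Nat.card (Sym2 V), by rintro _ ⟨F', -, rfl⟩; exact Set.ncard_le_card _⟩
    ⟨F, hF, rfl⟩

end LinearForest

theorem two_mul_le_maxLF (G : SimpleGraph V) (X : Set V) {d : ℕ}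
    (hdeg : ∀ x ∈ X, d ≤ (G.neighborSet x ∩ X).ncard) (hcard : 2 * d < X.ncard) :
    2 * d ≤ maxLF G X := by
  rcases Nat.eq_zero_or_pos d with rfl | hd
  · exact Nat.zero_le _
  set H := ((⊤ : G.Subgraph).induce X).spanningCoe
  have hHX : ∀ a b, H.Adj a b → a ∈ X := fun _ _ h => h.1
  have hHdeg : ∀ x ∈ X, d ≤ (H.neighborSet x).ncard := fun x hx => by
    rw [Subgraph.neighborSet_spanningCoe_induce_top hx]; exact hdeg x hx
  obtain ⟨u, v, p, hp, -, hdp, hclosed⟩ :=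
    exists_isPath_long_or_closed hd (Set.nonempty_of_ncard_ne_zero (by omega)) hHX hHdeg
  set P := (⊥ : SimpleGraph V) ⊔ p.toSubgraph.spanningCoe
  have hP : IsLinearForestOn G X P :=
    isLinearForestOn_bot.sup_toSubgraph_spanningCoe (Subgraph.spanningCoe_le _) hHX hp (by simp)
  have hPcard : P.edgeSet.ncard = p.length := by
    rw [ncard_edgeSet_sup_toSubgraph_spanningCoe hp (by simp), edgeSet_bot, Set.ncard_empty,
      zero_add]
  by_cases hlong : 2 * d ≤ p.length
  · exact hPcard ▸ hlong |>.trans hP.ncard_edgeSet_le_maxLF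
  have hY : (X \ {w | w ∈ p.support}).Nonempty := Set.nonempty_of_ncard_ne_zero <| by
    have := Set.le_ncard_sdiff {w | w ∈ p.support} X (List.finite_toSet _)
    rw [hp.ncard_support] at this
    omega
  set Y := X \ {w | w ∈ p.support}
  set H' := ((⊤ : G.Subgraph).induce Y).spanningCoe
  have hH'Y : ∀ a b, H'.Adj a b → a ∈ Y := fun _ _ h => h.1
  have hH'deg : ∀ y ∈ Y, d ≤ (H'.neighborSet y).ncard := fun y hy => by
    rw [Subgraph.neighborSet_spanningCoe_induce_top hy]
    refine (hdeg y hy.1).trans (Set.ncard_le_ncard fun z ⟨hyz, hzX⟩ => ⟨hyz, hzX, fun hzS => ?_⟩)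
    exact hy.2 (hclosed (by omega) z hzS y ⟨hzX, hy.1, hyz.symm⟩)
  obtain ⟨a, b, q, hq, hqY, hdq, -⟩ := exists_isPath_long_or_closed hd hY hH'Y hH'deg
  have hisol : ∀ w ∈ q.support, P.neighborSet w = ∅ := fun w hw =>
    Set.eq_empty_of_forall_notMem fun z hz => (hqY w hw).2 <| by
      simpa using p.mem_support_of_adj_toSubgraph (hz.resolve_left id)
  have hF := hP.sup_toSubgraph_spanningCoe (Subgraph.spanningCoe_le _)
    (fun a b h => (hH'Y a b h).1) hq hisol
  have hFcard := ncard_edgeSet_sup_toSubgraph_spanningCoe hq hisol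
  exact (by omega : 2 * d ≤ _).trans hF.ncard_edgeSet_le_maxLF

/-- Claim: if `|X| > 2ηn` and `Δ(G[X]) ≤ ηn`, then `f(X) ≥ 2 δ(G[X])`. -/
theorem stmt16 (G : SimpleGraph V) (X : Set V) (η : ℝ) (hη : 0 < η)
    (hX : 2 * η * (Fintype.card V : ℝ) < (X.ncard : ℝ))
    (hΔ : ∀ v ∈ X, ((G.neighborSet v ∩ X).ncard : ℝ) ≤ η * (Fintype.card V : ℝ)) :
    ∀ d : ℕ, (∀ x ∈ X, d ≤ (G.neighborSet x ∩ X).ncard) →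
      2 * d ≤ maxLF G X := by
  intro d hd
  refine two_mul_le_maxLF G X hd ?_
  obtain ⟨x, hx⟩ : X.Nonempty := Set.nonempty_of_ncard_ne_zero fun h => by
    rw [h, Nat.cast_zero] at hX
    linarith [show 0 ≤ 2 * η * (Fintype.card V : ℝ) by positivity]
  have hdη : (d : ℝ) ≤ η * Fintype.card V := (Nat.cast_le.2 (hd x hx)).trans (hΔ x hx)
  exact_mod_cast (by push_cast; linarith : ((2 * d : ℕ) : ℝ) < X.ncard)
end
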